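/- arXiv:1806.02603 — 4 statements merged into one kernel-verified Lean document; each statement's English description precedes it below -/
import Mathlib

section
/- Let G be a connected graph, α ∈ [0,1), and X a unit eigenvector of A_α(G) for the spectral radius. Suppose v₁u₁ and v₂u₂ are edges of G while v₁v₂ and u₁u₂ are non-edges. Let G' be obtained from G by deleting the edges v₁u₁, v₂u₂ and adding the edges v₁v₂, u₁u₂. If x_{v₁} ≥ x_{u₂} and x_{v₂} ≥ x_{u₁}, then ρ(A_α(G')) ≥ ρ(A_α(G)); moreover if at least one of these two inequalities is strict, then ρ(A_α(G')) > ρ(A_α(G)). -/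
open Matrix Finset SimpleGraph
open scoped Classical

/-- Degree of a vertex (no decidability assumptions). -/
noncomputable def deg {V : Type*} (G : SimpleGraph V) (v : V) : ℕ :=
  (G.neighborSet v).ncard

/-- The matrix `A_alpha(G) = alpha D(G) + (1-alpha) A(G)`. -/
noncomputable def Aalpha {V : Type*} [Fintype V] (G : SimpleGraph V) (α : ℝ) :
    Matrix V V ℝ :=
  fun i j => if i = j then α * (deg G i : ℝ) else if G.Adj i j then 1 - α else 0

/-- The spectral radius (largest eigenvalue) of a real symmetric matrix,
as the supremum of its eigenvalues. -/
noncomputable def specRad {V : Type*} [Fintype V] (M : Matrix V V ℝ) : ℝ :=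
  sSup {t : ℝ | ∃ x : V → ℝ, x ≠ 0 ∧ M.mulVec x = t • x}

/-! The 2-switch adds `S = E(v₁v₂) + E(u₁u₂) - E(v₁u₁) - E(v₂u₂)` to the adjacency matrix,
`E(ab)` being the symmetric 0/1 matrix of the pair `ab`, and preserves every degree because each
of `v₁, u₁, v₂, u₂` loses one edge and gains one; hence `A_α(G') = A_α(G) + (1 - α) S`.

For a real symmetric `M`, `ρ(M) I - M` is positive semidefinite, so `xᵀ M x ≤ ρ(M) |x|²`, with
equality only if `M x = ρ(M) x`. At `X` the quadratic form of `A_α(G')` equals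
`ρ(G) + 2 (1 - α) (x_{v₁} - x_{u₂}) (x_{v₂} - x_{u₁}) ≥ ρ(G)`. If `ρ(G') = ρ(G)`, then `X` is an
eigenvector of both matrices for the same eigenvalue, so `S X = 0`; its entries at `v₁` and `v₂`
are `x_{v₂} - x_{u₁}` and `x_{v₁} - x_{u₂}`. -/

namespace Matrix

variable {ι : Type*} [Fintype ι] [DecidableEq ι]

theorem mem_spectrum_iff_exists_mulVec_eq_smul {K : Type*} [Field K] {M : Matrix ι ι K} {t : K} :
    t ∈ spectrum K M ↔ ∃ x : ι → K, x ≠ 0 ∧ M *ᵥ x = t • x := by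
  rw [← spectrum_toLin', ← Module.End.hasEigenvalue_iff_mem_spectrum]
  refine ⟨fun h => ?_, fun ⟨x, hx, hMx⟩ => Module.End.hasEigenvalue_of_hasEigenvector ⟨?_, hx⟩⟩
  · obtain ⟨x, hx, hx0⟩ := h.exists_hasEigenvector
    exact ⟨x, hx0, by simpa using Module.End.mem_eigenspace_iff.mp hx⟩
  · simpa [Module.End.mem_eigenspace_iff] using hMx

theorem specRad_eq_sSup_spectrum (M : Matrix ι ι ℝ) : specRad M = sSup (spectrum ℝ M) := by
  simp only [specRad, ← mem_spectrum_iff_exists_mulVec_eq_smul, Set.ofPred_mem_eq]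

theorem le_specRad {M : Matrix ι ι ℝ} {t : ℝ} (ht : t ∈ spectrum ℝ M) : t ≤ specRad M :=
  specRad_eq_sSup_spectrum M ▸ le_csSup M.finite_spectrum.bddAbove ht

namespace IsHermitian

variable {M : Matrix ι ι ℝ} (hM : M.IsHermitian)
include hM

theorem posSemidef_specRad_smul_one_sub : (specRad M • 1 - M).PosSemidef := by
  refine posSemidef_iff_isHermitian_and_spectrum_nonneg.mpr
    ⟨(isHermitian_one.smul (IsSelfAdjoint.all _)).sub hM, ?_⟩
  rw [← Algebra.algebraMap_eq_smul_one, ← spectrum.singleton_sub_eq]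
  rintro _ ⟨_, rfl, t, ht, rfl⟩
  exact sub_nonneg.mpr (le_specRad ht)

theorem dotProduct_mulVec_le_specRad (x : ι → ℝ) :
    x ⬝ᵥ (M *ᵥ x) ≤ specRad M * (x ⬝ᵥ x) := by
  simpa [sub_mulVec, smul_mulVec, dotProduct_sub] using
    hM.posSemidef_specRad_smul_one_sub.dotProduct_mulVec_nonneg x

theorem mulVec_eq_specRad_smul_of_le {x : ι → ℝ}
    (h : specRad M * (x ⬝ᵥ x) ≤ x ⬝ᵥ (M *ᵥ x)) : M *ᵥ x = specRad M • x := by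
  have hzero : star x ⬝ᵥ ((specRad M • 1 - M) *ᵥ x) = 0 := by
    simp only [star_trivial, sub_mulVec, smul_mulVec, one_mulVec, dotProduct_sub,
      dotProduct_smul, smul_eq_mul]
    linarith [hM.dotProduct_mulVec_le_specRad x]
  simpa [sub_mulVec, smul_mulVec, sub_eq_zero, eq_comm] using
    (hM.posSemidef_specRad_smul_one_sub.dotProduct_mulVec_zero_iff x).mp hzero

end IsHermitian

end Matrix

section EdgeMatrix

variable {V : Type*} [DecidableEq V]

def edgeMatrix (R : Type*) [Zero R] [One R] (e : Sym2 V) : Matrix V V R :=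
  fun i j => if s(i, j) = e then 1 else 0

variable [Fintype V] {R : Type*} [CommSemiring R]

theorem edgeMatrix_mulVec_apply {a b : V} (hab : a ≠ b) (x : V → R) (c : V) :
    (edgeMatrix R s(a, b) *ᵥ x) c = (if c = a then x b else 0) + (if c = b then x a else 0) := by
  have hterm (j : V) : edgeMatrix R s(a, b) c j * x j =
      (if c = a then if b = j then x j else 0 else 0) +
        (if c = b then if a = j then x j else 0 else 0) := by
    by_cases hca : c = a <;> by_cases hcb : c = b <;> by_cases hja : j = a <;>
      by_cases hjb : j = b <;> simp_all [edgeMatrix, eq_comm]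
  simp only [mulVec, dotProduct, hterm, Finset.sum_add_distrib, Finset.sum_ite_irrel,
    Finset.sum_ite_eq, Finset.mem_univ, if_true, Finset.sum_const_zero]

theorem dotProduct_edgeMatrix_mulVec {a b : V} (hab : a ≠ b) (x : V → R) :
    x ⬝ᵥ (edgeMatrix R s(a, b) *ᵥ x) = 2 * (x a * x b) := by
  simp only [dotProduct, edgeMatrix_mulVec_apply hab, mul_add, mul_ite, mul_zero,
    Finset.sum_add_distrib, Finset.sum_ite_eq', Finset.mem_univ, if_true]
  ring

def switchMatrix (v₁ u₁ v₂ u₂ : V) : Matrix V V ℝ :=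
  edgeMatrix ℝ s(v₁, v₂) + edgeMatrix ℝ s(u₁, u₂) - edgeMatrix ℝ s(v₁, u₁) - edgeMatrix ℝ s(v₂, u₂)

variable {v₁ u₁ v₂ u₂ : V}

theorem switchMatrix_mulVec_apply (hv : v₁ ≠ v₂) (hu : u₁ ≠ u₂) (h₁ : v₁ ≠ u₁) (h₂ : v₂ ≠ u₂)
    (x : V → ℝ) (c : V) :
    (switchMatrix v₁ u₁ v₂ u₂ *ᵥ x) c =
      (if c = v₁ then x v₂ - x u₁ else 0) + (if c = v₂ then x v₁ - x u₂ else 0) +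
        (if c = u₁ then x u₂ - x v₁ else 0) + (if c = u₂ then x u₁ - x v₂ else 0) := by
  simp only [switchMatrix, sub_mulVec, add_mulVec, Pi.sub_apply, Pi.add_apply,
    edgeMatrix_mulVec_apply hv, edgeMatrix_mulVec_apply hu, edgeMatrix_mulVec_apply h₁,
    edgeMatrix_mulVec_apply h₂]
  split_ifs <;> ring

theorem dotProduct_switchMatrix_mulVec (hv : v₁ ≠ v₂) (hu : u₁ ≠ u₂) (h₁ : v₁ ≠ u₁)
    (h₂ : v₂ ≠ u₂) (x : V → ℝ) :
    x ⬝ᵥ (switchMatrix v₁ u₁ v₂ u₂ *ᵥ x) = 2 * ((x v₁ - x u₂) * (x v₂ - x u₁)) := by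
  simp only [switchMatrix, sub_mulVec, add_mulVec, dotProduct_sub, dotProduct_add,
    dotProduct_edgeMatrix_mulVec hv, dotProduct_edgeMatrix_mulVec hu,
    dotProduct_edgeMatrix_mulVec h₁, dotProduct_edgeMatrix_mulVec h₂]
  ring

end EdgeMatrix

structure IsTwoSwitch {V : Type*} (G G' : SimpleGraph V) (v₁ u₁ v₂ u₂ : V) : Prop where
  adj₁ : G.Adj v₁ u₁
  adj₂ : G.Adj v₂ u₂
  not_adj_v : ¬ G.Adj v₁ v₂
  not_adj_u : ¬ G.Adj u₁ u₂
  ne_v : v₁ ≠ v₂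
  ne_u : u₁ ≠ u₂
  adj_iff : ∀ a b : V, G'.Adj a b ↔
    ((G.Adj a b ∧ ¬ (s(a, b) = s(v₁, u₁) ∨ s(a, b) = s(v₂, u₂))) ∨
      s(a, b) = s(v₁, v₂) ∨ s(a, b) = s(u₁, u₂))

theorem deg_eq_degree {V : Type*} (G : SimpleGraph V) (v : V) [Fintype (G.neighborSet v)] :
    deg G v = G.degree v := by
  rw [deg, ← Nat.card_coe_set_eq, Nat.card_eq_fintype_card, card_neighborSet_eq_degree]

theorem Aalpha_eq_diagonal_add_smul_adjMatrix {V : Type*} [Fintype V] [DecidableEq V]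
    (G : SimpleGraph V) (α : ℝ) :
    Aalpha G α = diagonal (fun v => α * deg G v) + (1 - α) • G.adjMatrix ℝ := by
  ext i j
  by_cases h : i = j
  · subst h
    simp [Aalpha]
  · simp [Aalpha, h, adjMatrix_apply]

theorem isHermitian_Aalpha {V : Type*} [Fintype V] (G : SimpleGraph V) (α : ℝ) :
    (Aalpha G α).IsHermitian := by
  rw [Aalpha_eq_diagonal_add_smul_adjMatrix]
  exact (isHermitian_diagonal _).add ((G.isHermitian_adjMatrix ℝ).smul (IsSelfAdjoint.all _))

namespace IsTwoSwitch

variable {V : Type*} {G G' : SimpleGraph V} {v₁ u₁ v₂ u₂ : V}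
  (hs : IsTwoSwitch G G' v₁ u₁ v₂ u₂)
include hs

theorem v₁_ne_u₂ : v₁ ≠ u₂ := by
  rintro rfl
  exact hs.not_adj_v hs.adj₂.symm

theorem v₂_ne_u₁ : v₂ ≠ u₁ := by
  rintro rfl
  exact hs.not_adj_v hs.adj₁

variable [DecidableEq V]

theorem adjMatrix_eq : G'.adjMatrix ℝ = G.adjMatrix ℝ + switchMatrix v₁ u₁ v₂ u₂ := by
  have hr : s(v₁, u₁) ≠ s(v₂, u₂) := by simp [hs.ne_v, hs.v₁_ne_u₂]
  have ha : s(v₁, v₂) ≠ s(u₁, u₂) := by simp [hs.adj₁.ne, hs.v₁_ne_u₂]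
  have hr₁ : s(v₁, u₁) ∈ G.edgeSet := hs.adj₁
  have hr₂ : s(v₂, u₂) ∈ G.edgeSet := hs.adj₂
  have ha₁ : s(v₁, v₂) ∉ G.edgeSet := hs.not_adj_v
  have ha₂ : s(u₁, u₂) ∉ G.edgeSet := hs.not_adj_u
  ext i j
  rw [Matrix.add_apply, adjMatrix_apply, adjMatrix_apply, hs.adj_iff]
  simp only [switchMatrix, edgeMatrix, Matrix.add_apply, Matrix.sub_apply, ← mem_edgeSet]
  generalize s(i, j) = e
  split_ifs <;> grind

variable [Fintype V]

theorem switchMatrix_mulVec_one : switchMatrix v₁ u₁ v₂ u₂ *ᵥ Function.const V (1 : ℝ) = 0 := by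
  ext c
  rw [switchMatrix_mulVec_apply hs.ne_v hs.ne_u hs.adj₁.ne hs.adj₂.ne]
  simp

theorem deg_eq (v : V) : deg G' v = deg G v := by
  have := congrFun (congrArg (· *ᵥ Function.const V (1 : ℝ)) hs.adjMatrix_eq) v
  simp only [add_mulVec, hs.switchMatrix_mulVec_one, add_zero, adjMatrix_mulVec_const_apply,
    mul_one, Nat.cast_inj] at this
  rw [deg_eq_degree, deg_eq_degree, this]

theorem Aalpha_eq (α : ℝ) : Aalpha G' α = Aalpha G α + (1 - α) • switchMatrix v₁ u₁ v₂ u₂ := by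
  simp only [Aalpha_eq_diagonal_add_smul_adjMatrix, hs.adjMatrix_eq, hs.deg_eq, smul_add, add_assoc]

theorem dotProduct_switchMatrix_mulVec (x : V → ℝ) :
    x ⬝ᵥ (switchMatrix v₁ u₁ v₂ u₂ *ᵥ x) = 2 * ((x v₁ - x u₂) * (x v₂ - x u₁)) :=
  _root_.dotProduct_switchMatrix_mulVec hs.ne_v hs.ne_u hs.adj₁.ne hs.adj₂.ne x

theorem eq_of_switchMatrix_mulVec_eq_zero {x : V → ℝ} (hx : switchMatrix v₁ u₁ v₂ u₂ *ᵥ x = 0) :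
    x v₂ = x u₁ ∧ x v₁ = x u₂ := by
  have h₁ := congrFun hx v₁
  have h₂ := congrFun hx v₂
  simp only [switchMatrix_mulVec_apply hs.ne_v hs.ne_u hs.adj₁.ne hs.adj₂.ne, if_true, if_false,
    hs.ne_v, hs.ne_v.symm, hs.adj₁.ne, hs.adj₂.ne, hs.v₁_ne_u₂, hs.v₂_ne_u₁, add_zero, zero_add,
    Pi.zero_apply] at h₁ h₂
  exact ⟨sub_eq_zero.mp h₁, sub_eq_zero.mp h₂⟩

end IsTwoSwitch

theorem stmt_1_general {n : ℕ} (G G' : SimpleGraph (Fin n))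
    (α : ℝ) (hα1 : α < 1)
    (v₁ u₁ v₂ u₂ : Fin n)
    (h1 : G.Adj v₁ u₁) (h2 : G.Adj v₂ u₂)
    (h3 : ¬ G.Adj v₁ v₂) (h4 : ¬ G.Adj u₁ u₂)
    (h5 : v₁ ≠ v₂) (h6 : u₁ ≠ u₂)
    (hG' : ∀ a b : Fin n, G'.Adj a b ↔
      ((G.Adj a b ∧ ¬ (s(a, b) = s(v₁, u₁) ∨ s(a, b) = s(v₂, u₂))) ∨
        s(a, b) = s(v₁, v₂) ∨ s(a, b) = s(u₁, u₂)))
    (X : Fin n → ℝ) (hXunit : ∑ i, X i ^ 2 = 1)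
    (hXeig : (Aalpha G α) *ᵥ X = specRad (Aalpha G α) • X)
    (hx1 : X u₂ ≤ X v₁) (hx2 : X u₁ ≤ X v₂) :
    specRad (Aalpha G α) ≤ specRad (Aalpha G' α) ∧
    ((X u₂ < X v₁ ∨ X u₁ < X v₂) →
      specRad (Aalpha G α) < specRad (Aalpha G' α)) := by
  have hs : IsTwoSwitch G G' v₁ u₁ v₂ u₂ := ⟨h1, h2, h3, h4, h5, h6, hG'⟩
  have hXX : X ⬝ᵥ X = 1 := by simpa [dotProduct, sq] using hXunit
  have hα : 0 < 1 - α := sub_pos.mpr hα1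
  have hquad : X ⬝ᵥ (Aalpha G' α *ᵥ X) =
      specRad (Aalpha G α) + (1 - α) * (2 * ((X v₁ - X u₂) * (X v₂ - X u₁))) := by
    rw [hs.Aalpha_eq, add_mulVec, smul_mulVec, dotProduct_add, dotProduct_smul, hXeig,
      dotProduct_smul, hXX, hs.dotProduct_switchMatrix_mulVec, smul_eq_mul, smul_eq_mul, mul_one]
  have hgain : 0 ≤ (1 - α) * (2 * ((X v₁ - X u₂) * (X v₂ - X u₁))) :=
    mul_nonneg hα.le (mul_nonneg zero_le_two (mul_nonneg (sub_nonneg.mpr hx1) (sub_nonneg.mpr hx2)))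
  have hrayleigh := (isHermitian_Aalpha G' α).dotProduct_mulVec_le_specRad X
  rw [hXX, mul_one] at hrayleigh
  refine ⟨by linarith, fun hstrict => lt_of_not_ge fun hle => ?_⟩
  have heig' : Aalpha G' α *ᵥ X = specRad (Aalpha G' α) • X :=
    (isHermitian_Aalpha G' α).mulVec_eq_specRad_smul_of_le (by rw [hXX, mul_one]; linarith)
  have hSX : switchMatrix v₁ u₁ v₂ u₂ *ᵥ X = 0 := by
    rw [show specRad (Aalpha G' α) = specRad (Aalpha G α) by linarith, hs.Aalpha_eq,
      add_mulVec, hXeig, smul_mulVec, add_eq_left, smul_eq_zero] at heig'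
    exact heig'.resolve_left hα.ne'
  obtain ⟨hv, hu⟩ := hs.eq_of_switchMatrix_mulVec_eq_zero hSX
  rcases hstrict with h | h <;> linarith

theorem stmt_1 {n : ℕ} (G G' : SimpleGraph (Fin n)) (hG : G.Connected)
    (α : ℝ) (hα0 : 0 ≤ α) (hα1 : α < 1)
    (v₁ u₁ v₂ u₂ : Fin n)
    (h1 : G.Adj v₁ u₁) (h2 : G.Adj v₂ u₂)
    (h3 : ¬ G.Adj v₁ v₂) (h4 : ¬ G.Adj u₁ u₂)
    (h5 : v₁ ≠ v₂) (h6 : u₁ ≠ u₂)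
    (hG' : ∀ a b : Fin n, G'.Adj a b ↔
      ((G.Adj a b ∧ ¬ (s(a, b) = s(v₁, u₁) ∨ s(a, b) = s(v₂, u₂))) ∨
        s(a, b) = s(v₁, v₂) ∨ s(a, b) = s(u₁, u₂)))
    (X : Fin n → ℝ) (hXunit : ∑ i, X i ^ 2 = 1)
    (hXeig : (Aalpha G α) *ᵥ X = specRad (Aalpha G α) • X)
    (hx1 : X u₂ ≤ X v₁) (hx2 : X u₁ ≤ X v₂) :
    specRad (Aalpha G α) ≤ specRad (Aalpha G' α) ∧
    ((X u₂ < X v₁ ∨ X u₁ < X v₂) →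
      specRad (Aalpha G α) < specRad (Aalpha G' α)) :=
  stmt_1_general G G' α hα1 v₁ u₁ v₂ u₂ h1 h2 h3 h4 h5 h6 hG' X hXunit hXeig hx1 hx2
end

section
/- Let G be a connected graph, w a vertex of G, and for positive integers k, s let G(k,s) denote the graph obtained from the disjoint union G ∪ P_k ∪ P_s by adding an edge from w to one end vertex of the path P_k and an edge from w to one end vertex of the path P_s. Suppose k ≥ s + 2, α ∈ [0,1), and ρ(A_α(G(k,s))) ≥ 2. Then ρ(A_α(G(k,s))) < ρ(A_α(G(k−1, s+1))). -/
open Matrix Finset SimpleGraph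
open scoped Classical

/-- The graph `G(k, s)`: attach at the vertex `w` of `G` two pendant paths,
with `k` and `s` vertices respectively. -/
def pendantPaths {m : ℕ} (G : SimpleGraph (Fin m)) (w : Fin m) (k s : ℕ) :
    SimpleGraph (Fin m ⊕ (Fin k ⊕ Fin s)) :=
  SimpleGraph.fromRel (fun x y =>
    match x, y with
    | Sum.inl a, Sum.inl b => G.Adj a b
    | Sum.inl a, Sum.inr (Sum.inl i) => a = w ∧ (i : ℕ) = 0
    | Sum.inl a, Sum.inr (Sum.inr i) => a = w ∧ (i : ℕ) = 0
    | Sum.inr (Sum.inl i), Sum.inr (Sum.inl j) => (j : ℕ) = (i : ℕ) + 1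
    | Sum.inr (Sum.inr i), Sum.inr (Sum.inr j) => (j : ℕ) = (i : ℕ) + 1
    | _, _ => False)

/-!
Let `x ≥ 0` be a Perron vector of `A_α(G(k,s))` for `ρ = ρ(A_α(G(k,s)))` (a maximiser of the
Rayleigh quotient; its entrywise absolute value is again one). Divided by `1 - α`, the
eigen-equations along a pendant path read `x_{n-1} + x_{n+1} = t x_n` at inner vertices and
`x_{L-1} = c x_L` at the leaf, where `ρ = 2α + (1 - α) t = α + (1 - α) c`. Read from the leaf, the
entries are therefore `P_j x_leaf` with `P_0 = 1`, `P_1 = c`, `P_{j+2} = t P_{j+1} - P_j`, so `x` is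
determined on each arm by `x_w`, and the first vertex of an arm with `L` vertices carries
`r(L) x_w`, where `r(L) = P_{L-1} / P_L`.

Transplant `x` to `G(k-1, s+1)`: keep it on `G` and fill the arms with the same profiles. Every
eigen-equation still holds except the one at `w`, which is off by `(1 - α) x_w δ` with
`δ = r(k-1) + r(s+1) - r(k) - r(s)`. Now `ρ ≥ 2` gives `t ≥ 2` and `c ≥ t`, so `P` is positive
and increasing, and `P_{n+1}^2 - P_n P_{n+2} = c^2 - t c + 1 > 0` makes the increments of `r`
decrease; hence `δ > 0`. As `G` is connected, `x_w > 0`, so the Rayleigh quotient of the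
transplanted vector exceeds `ρ`.
-/

namespace Matrix

variable {V : Type*} [Fintype V] {M : Matrix V V ℝ}

theorem dotProduct_self_pos {z : V → ℝ} (hz : z ≠ 0) : 0 < z ⬝ᵥ z := by
  simpa using dotProduct_self_star_pos_iff.mpr hz

theorem exists_dotProduct_mulVec_le_and_eq [Nonempty V] (M : Matrix V V ℝ) :
    ∃ μ : ℝ, (∀ z, z ⬝ᵥ M *ᵥ z ≤ μ * (z ⬝ᵥ z)) ∧ ∃ x ≠ 0, x ⬝ᵥ M *ᵥ x = μ * (x ⬝ᵥ x) := by
  let R : (V → ℝ) → ℝ := fun z => z ⬝ᵥ M *ᵥ z / (z ⬝ᵥ z)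
  have hR : ContinuousOn R (Metric.sphere 0 1) := by
    refine ContinuousOn.div (by fun_prop) (by fun_prop) fun z hz => ?_
    rw [Ne, dotProduct_self_eq_zero]
    rintro rfl
    simp at hz
  obtain ⟨x, hx, hmax⟩ := (isCompact_sphere (0 : V → ℝ) 1).exists_isMaxOn
    (NormedSpace.sphere_nonempty.mpr zero_le_one) hR
  have hx0 : x ≠ 0 := ne_zero_of_mem_unit_sphere ⟨x, hx⟩
  refine ⟨R x, fun z => ?_, x, hx0, by simp [R, hx0]⟩
  rcases eq_or_ne z 0 with rfl | hz
  · simp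
  have hscale : R (‖z‖⁻¹ • z) = R z := by
    have : ‖z‖⁻¹ ≠ 0 := by simpa using hz
    simp only [R, mulVec_smul, dotProduct_smul, smul_dotProduct, smul_eq_mul]
    field_simp
  have := isMaxOn_iff.mp hmax _ (by simp [norm_smul, hz] : ‖z‖⁻¹ • z ∈ Metric.sphere 0 1)
  rwa [hscale, div_le_iff₀ (dotProduct_self_pos hz)] at this

theorem mulVec_eq_smul_of_dotProduct_mulVec_eq (hM : M.IsSymm) {μ : ℝ}
    (hμ : ∀ z, z ⬝ᵥ M *ᵥ z ≤ μ * (z ⬝ᵥ z)) {x : V → ℝ} (hx : x ⬝ᵥ M *ᵥ x = μ * (x ⬝ᵥ x)) :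
    M *ᵥ x = μ • x := by
  classical
  have hpsd : (μ • (1 : Matrix V V ℝ) - M).PosSemidef := by
    refine .of_dotProduct_mulVec_nonneg ?_ fun z => ?_
    · exact isHermitian_iff_isSymm.mpr ((isSymm_one.smul μ).sub hM)
    · simpa [sub_mulVec, smul_mulVec, dotProduct_sub] using hμ z
  have := (hpsd.dotProduct_mulVec_zero_iff x).mp
    (by simp [sub_mulVec, smul_mulVec, dotProduct_sub, hx])
  rwa [sub_mulVec, sub_eq_zero, smul_mulVec, one_mulVec, eq_comm] at this

theorem specRad_eq_of_dotProduct_mulVec_eq (hM : M.IsSymm) {μ : ℝ}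
    (hμ : ∀ z, z ⬝ᵥ M *ᵥ z ≤ μ * (z ⬝ᵥ z)) {x : V → ℝ} (hx0 : x ≠ 0)
    (hx : x ⬝ᵥ M *ᵥ x = μ * (x ⬝ᵥ x)) : specRad M = μ := by
  have hbound : μ ∈ upperBounds {t : ℝ | ∃ x : V → ℝ, x ≠ 0 ∧ M *ᵥ x = t • x} := by
    rintro t ⟨z, hz0, hz⟩
    have := hμ z
    rw [hz, dotProduct_smul, smul_eq_mul] at this
    exact le_of_mul_le_mul_right this (dotProduct_self_pos hz0)
  exact IsGreatest.csSup_eq ⟨⟨x, hx0, mulVec_eq_smul_of_dotProduct_mulVec_eq hM hμ hx⟩, hbound⟩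

theorem dotProduct_mulVec_le_specRad_mul [Nonempty V] (hM : M.IsSymm) (z : V → ℝ) :
    z ⬝ᵥ M *ᵥ z ≤ specRad M * (z ⬝ᵥ z) := by
  obtain ⟨μ, hμ, x, hx0, hx⟩ := exists_dotProduct_mulVec_le_and_eq M
  rw [specRad_eq_of_dotProduct_mulVec_eq hM hμ hx0 hx]
  exact hμ z

theorem lt_specRad_of_lt_dotProduct_mulVec [Nonempty V] (hM : M.IsSymm) {r : ℝ} {y : V → ℝ}
    (hy : y ≠ 0) (h : r * (y ⬝ᵥ y) < y ⬝ᵥ M *ᵥ y) : r < specRad M :=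
  lt_of_mul_lt_mul_right (h.trans_le (dotProduct_mulVec_le_specRad_mul hM y))
    (dotProduct_self_pos hy).le

theorem lt_specRad_of_mulVec_eq_add_smul_single [Nonempty V] [DecidableEq V] (hM : M.IsSymm)
    {ρ δ : ℝ} {y : V → ℝ} {v : V} (hv : 0 < y v) (hδ : 0 < δ)
    (h : M *ᵥ y = ρ • y + δ • Pi.single v 1) : ρ < specRad M := by
  refine lt_specRad_of_lt_dotProduct_mulVec hM (fun hy => hv.ne' (congrFun hy v)) ?_
  rw [h, dotProduct_add, dotProduct_smul, dotProduct_smul, dotProduct_single, smul_eq_mul,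
    smul_eq_mul, mul_one]
  exact lt_add_of_pos_right _ (mul_pos hδ hv)

theorem exists_nonneg_mulVec_eq_specRad_smul [Nonempty V] (hM : M.IsSymm)
    (hM₀ : ∀ i j, i ≠ j → 0 ≤ M i j) :
    ∃ x : V → ℝ, x ≠ 0 ∧ 0 ≤ x ∧ M *ᵥ x = specRad M • x := by
  obtain ⟨μ, hμ, x, hx0, hx⟩ := exists_dotProduct_mulVec_le_and_eq M
  have hspec := specRad_eq_of_dotProduct_mulVec_eq hM hμ hx0 hx
  set y : V → ℝ := fun i => |x i|
  have hyy : y ⬝ᵥ y = x ⬝ᵥ x := by simp [y, dotProduct]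
  have hy0 : y ≠ 0 := by
    intro h
    exact hx0 (funext fun i => abs_eq_zero.mp (congrFun h i))
  have hxy : x ⬝ᵥ M *ᵥ x ≤ y ⬝ᵥ M *ᵥ y := by
    simp only [dotProduct, mulVec, Finset.mul_sum]
    refine Finset.sum_le_sum fun i _ => Finset.sum_le_sum fun j _ => ?_
    rcases eq_or_ne i j with rfl | hij
    · rw [mul_left_comm, mul_left_comm |x i|, abs_mul_abs_self]
    · rw [mul_left_comm, mul_left_comm |x i|, ← abs_mul]
      exact mul_le_mul_of_nonneg_left (le_abs_self _) (hM₀ i j hij)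
  refine ⟨y, hy0, fun i => abs_nonneg (x i), ?_⟩
  rw [hspec]
  exact mulVec_eq_smul_of_dotProduct_mulVec_eq hM hμ
    (le_antisymm (hμ y) (by rw [hyy, ← hx]; exact hxy))

end Matrix

section Aalpha

variable {V : Type*} [Fintype V] (H : SimpleGraph V) (α : ℝ)

theorem deg_eq_adjMatrix_mulVec_one (v : V) : (deg H v : ℝ) = (H.adjMatrix ℝ *ᵥ 1) v := by
  have : deg H v = H.degree v := by
    simp [deg, ← card_neighborFinset_eq_degree, neighborFinset, Set.ncard_eq_toFinset_card']
  simp [this, ← Function.const_one]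

theorem Aalpha_mulVec_apply (z : V → ℝ) (v : V) :
    (Aalpha H α *ᵥ z) v = α * deg H v * z v + (1 - α) * (H.adjMatrix ℝ *ᵥ z) v := by
  have : ∀ u, Aalpha H α v u * z u =
      (if v = u then α * deg H v * z v else 0) + (1 - α) * (H.adjMatrix ℝ v u * z u) := by
    intro u
    rcases eq_or_ne v u with rfl | h
    · simp [Aalpha]
    · simp [Aalpha, h]
  simp only [mulVec, dotProduct, this, Finset.sum_add_distrib, Finset.sum_ite_eq, Finset.mem_univ,
    if_true, Finset.mul_sum]

theorem Aalpha_isSymm : (Aalpha H α).IsSymm := by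
  refine IsSymm.ext fun i j => ?_
  rcases eq_or_ne i j with rfl | h
  · rfl
  · simp [Aalpha, h, h.symm, H.adj_comm]

variable {H α}

theorem Aalpha_nonneg_of_ne (hα : α ≤ 1) {i j : V} (h : i ≠ j) : 0 ≤ Aalpha H α i j := by
  simp only [Aalpha, if_neg h]
  split_ifs <;> linarith

theorem eq_zero_of_reachable_of_Aalpha_mulVec_eq (hα : α < 1) {ρ : ℝ} {z : V → ℝ} (hz : 0 ≤ z)
    (heig : Aalpha H α *ᵥ z = ρ • z) {u v : V} (hu : z u = 0) (huv : H.Reachable u v) :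
    z v = 0 := by
  obtain ⟨p⟩ := huv
  induction p with
  | nil => exact hu
  | @cons u u' v hadj p ih =>
    apply ih
    have hsum := congrFun heig u
    rw [Aalpha_mulVec_apply, adjMatrix_mulVec_apply, Pi.smul_apply, hu] at hsum
    simp only [mul_zero, smul_zero, zero_add] at hsum
    have : ∑ x ∈ H.neighborFinset u, z x = 0 :=
      (mul_eq_zero.mp hsum).resolve_left (by linarith)
    exact (Finset.sum_eq_zero_iff_of_nonneg fun x _ => hz x).mp this u' (by simpa using hadj)

end Aalpha

noncomputable def pathPoly (t c : ℝ) : ℕ → ℝ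
  | 0 => 1
  | 1 => c
  | n + 2 => t * pathPoly t c (n + 1) - pathPoly t c n

namespace pathPoly

variable {t c : ℝ}

@[simp] theorem zero : pathPoly t c 0 = 1 := rfl
@[simp] theorem one : pathPoly t c 1 = c := rfl
theorem add_two (n : ℕ) : pathPoly t c (n + 2) = t * pathPoly t c (n + 1) - pathPoly t c n := rfl

theorem one_le_and_lt_succ (ht : 2 ≤ t) (hc : 1 < c) (n : ℕ) :
    1 ≤ pathPoly t c n ∧ pathPoly t c n < pathPoly t c (n + 1) := by
  induction n with
  | zero => simpa using hc
  | succ n ih =>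
    obtain ⟨h1, h2⟩ := ih
    refine ⟨by linarith, ?_⟩
    rw [add_two]
    nlinarith

theorem pos (ht : 2 ≤ t) (hc : 1 < c) (n : ℕ) : 0 < pathPoly t c n :=
  zero_lt_one.trans_le (one_le_and_lt_succ ht hc n).1

theorem strictMono (ht : 2 ≤ t) (hc : 1 < c) : StrictMono (pathPoly t c) :=
  strictMono_nat_of_lt_succ fun n => (one_le_and_lt_succ ht hc n).2

theorem sq_sub_mul (n : ℕ) :
    pathPoly t c (n + 1) ^ 2 - pathPoly t c n * pathPoly t c (n + 2) = c ^ 2 - t * c + 1 := by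
  induction n with
  | zero => simp [add_two]; ring
  | succ n ih => rw [add_two (n + 1), add_two n] at *; linear_combination ih

end pathPoly

-- By `PathRecurrence.eq_div_mul`, this is the ratio between the values of an eigenvector at the
-- first vertex of a pendant path with `L` vertices and at its attachment vertex.
noncomputable def armRatio (t c : ℝ) (L : ℕ) : ℝ := pathPoly t c (L - 1) / pathPoly t c L

theorem armRatio_add_armRatio_lt {t c : ℝ} (ht : 2 ≤ t) (hc : 1 < c) (htc : t ≤ c) {k s : ℕ}
    (hs : 1 ≤ s) (hsk : s + 2 ≤ k) :
    armRatio t c k + armRatio t c s < armRatio t c (k - 1) + armRatio t c (s + 1) := by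
  have hP := pathPoly.pos ht hc
  have hinc : ∀ n, armRatio t c (n + 2) - armRatio t c (n + 1) =
      (c ^ 2 - t * c + 1) / (pathPoly t c (n + 1) * pathPoly t c (n + 2)) := by
    intro n
    have := (hP (n + 1)).ne'
    have := (hP (n + 2)).ne'
    rw [← pathPoly.sq_sub_mul n, armRatio, armRatio, show n + 2 - 1 = n + 1 by omega,
      Nat.add_sub_cancel]
    field_simp
  obtain ⟨a, rfl⟩ : ∃ a, s = a + 1 := ⟨s - 1, by omega⟩
  obtain ⟨b, rfl⟩ : ∃ b, k = b + 2 := ⟨k - 2, by omega⟩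
  have hmono := pathPoly.strictMono ht hc
  have hlt : (c ^ 2 - t * c + 1) / (pathPoly t c (b + 1) * pathPoly t c (b + 2)) <
      (c ^ 2 - t * c + 1) / (pathPoly t c (a + 1) * pathPoly t c (a + 2)) :=
    div_lt_div_of_pos_left (by nlinarith) (mul_pos (hP _) (hP _))
      (mul_lt_mul'' (hmono (by omega)) (hmono (by omega)) (hP _).le (hP _).le)
  rw [show b + 2 - 1 = b + 1 by omega]
  linarith [hinc a, hinc b]

/-- The eigen-equations along a pendant path with `L` vertices, divided by `1 - α`: `e 0` is the
value at the attachment vertex, `e n` the value at distance `n` from it, `t` the coefficient at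
inner vertices and `c` the one at the leaf, whose missing neighbour `e (L + 1)` should be `0`. -/
def PathRecurrence (t c : ℝ) (L : ℕ) (e : ℕ → ℝ) : Prop :=
  ∀ n, 0 < n → n ≤ L → e (n - 1) + e (n + 1) = (if n < L then t else c) * e n

namespace PathRecurrence

variable {t c : ℝ} {L : ℕ} {e : ℕ → ℝ}

theorem eq_pathPoly_mul (h : PathRecurrence t c L e) (hend : e (L + 1) = 0) :
    ∀ j ≤ L, e (L - j) = pathPoly t c j * e L := by
  intro j
  induction j using Nat.twoStepInduction with
  | zero => simp
  | one =>
    intro hL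
    simpa [hend] using h L (by omega) le_rfl
  | more j ih ih' =>
    intro hj
    have := h (L - (j + 1)) (by omega) (by omega)
    rw [if_pos (by omega), show L - (j + 1) - 1 = L - (j + 2) by omega,
      show L - (j + 1) + 1 = L - j by omega] at this
    rw [pathPoly.add_two, sub_mul, mul_assoc, ← ih' (by omega), ← ih (by omega)]
    linarith

theorem eq_div_mul (h : PathRecurrence t c L e) (hend : e (L + 1) = 0)
    (hL : pathPoly t c L ≠ 0) {n : ℕ} (hn : n ≤ L) :
    e n = e 0 / pathPoly t c L * pathPoly t c (L - n) := by
  have h0 := h.eq_pathPoly_mul hend L le_rfl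
  have hn' := h.eq_pathPoly_mul hend (L - n) (by omega)
  rw [Nat.sub_sub_self hn] at hn'
  rw [Nat.sub_self] at h0
  rw [hn', h0]
  field_simp

theorem of_pathPoly (b : ℝ) :
    PathRecurrence t c L fun n => if n ≤ L then b * pathPoly t c (L - n) else 0 := by
  intro n hn hnL
  dsimp only
  rw [if_pos (by omega : n - 1 ≤ L), if_pos hnL]
  split_ifs
  · rw [show L - (n - 1) = L - (n + 1) + 2 by omega, show L - n = L - (n + 1) + 1 by omega,
      pathPoly.add_two]
    ring
  · omega
  · omega
  · rw [show n = L by omega, show L - (L - 1) = 1 by omega]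
    simp [mul_comm]

theorem iff_forall_fin : PathRecurrence t c L e ↔
    ∀ i : Fin L, e i + e (i + 2) = (if (i : ℕ) + 1 < L then t else c) * e (i + 1) := by
  constructor
  · intro h i
    simpa using h (i + 1) (by omega) i.isLt
  · intro h n hn hnL
    obtain ⟨i, rfl⟩ : ∃ i, n = i + 1 := ⟨n - 1, by omega⟩
    simpa using h ⟨i, by omega⟩

end PathRecurrence

theorem arm_eigen_eq_iff {α ρ t c : ℝ} (hα : α < 1) (ht : ρ = 2 * α + (1 - α) * t)
    (hc : ρ = α + (1 - α) * c) (p : Prop) [Decidable p] (x N : ℝ) :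
    α * (if p then 2 else 1) * x + (1 - α) * N = ρ * x ↔ N = (if p then t else c) * x := by
  have h1α : 1 - α ≠ 0 := sub_ne_zero.mpr hα.ne'
  constructor
  · intro h
    apply mul_left_cancel₀ h1α
    split_ifs at h ⊢
    · linear_combination h + x * ht
    · linear_combination h + x * hc
  · rintro rfl
    split_ifs
    · linear_combination -(x * ht)
    · linear_combination -(x * hc)

-- The sequence read along a pendant path: `z₀` at the attachment vertex, then `f`, then zeros.
noncomputable def pathSeq {L : ℕ} (z₀ : ℝ) (f : Fin L → ℝ) : ℕ → ℝ
  | 0 => z₀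
  | n + 1 => if h : n < L then f ⟨n, h⟩ else 0

section pathSeq

variable {L : ℕ} (z₀ : ℝ) (f : Fin L → ℝ)

@[simp] theorem pathSeq_val_succ (i : Fin L) : pathSeq z₀ f (i + 1) = f i := by
  simp [pathSeq]

theorem pathSeq_succ_self : pathSeq z₀ f (L + 1) = 0 := by
  simp [pathSeq]

theorem sum_ite_val_eq_pathSeq (n : ℕ) :
    ∑ j : Fin L, (if (j : ℕ) = n then f j else 0) = pathSeq z₀ f (n + 1) := by
  simp only [pathSeq]
  split_ifs with h
  · rw [Finset.sum_eq_single ⟨n, h⟩ (fun j _ hj => if_neg (fun e => hj (Fin.ext e))) (by simp)]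
    simp
  · exact Finset.sum_eq_zero fun j _ => if_neg (by omega)

theorem sum_ite_adj_eq_pathSeq (i : Fin L) :
    (if (i : ℕ) = 0 then z₀ else 0) +
        ∑ j : Fin L, (if (j : ℕ) = i + 1 ∨ (i : ℕ) = j + 1 then f j else 0) =
      pathSeq z₀ f i + pathSeq z₀ f (i + 2) := by
  have hsplit : ∀ j : Fin L, (if (j : ℕ) = i + 1 ∨ (i : ℕ) = j + 1 then f j else 0) =
      (if (j : ℕ) = i + 1 then f j else 0) + (if (j : ℕ) + 1 = i then f j else 0) := by
    intro j
    split_ifs <;> first | omega | simp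
  rw [Finset.sum_congr rfl fun j _ => hsplit j, Finset.sum_add_distrib,
    sum_ite_val_eq_pathSeq z₀]
  obtain ⟨_ | i, hi⟩ := i
  · simp [pathSeq]
  · simp only [Nat.add_right_cancel_iff, sum_ite_val_eq_pathSeq z₀]
    simp [pathSeq, add_comm]

end pathSeq

namespace pendantPaths

variable {m : ℕ} {G : SimpleGraph (Fin m)} {w : Fin m} {K S : ℕ}

@[simp] theorem adj_inl_inl {a b : Fin m} :
    (pendantPaths G w K S).Adj (.inl a) (.inl b) ↔ G.Adj a b := by
  simp only [pendantPaths, fromRel_adj, ne_eq, Sum.inl.injEq, G.adj_comm b a, or_self,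
    and_iff_right_iff_imp]
  exact G.ne_of_adj

@[simp] theorem adj_inl_inr_inl {a : Fin m} {i : Fin K} :
    (pendantPaths G w K S).Adj (.inl a) (.inr (.inl i)) ↔ a = w ∧ (i : ℕ) = 0 := by
  simp [pendantPaths]

@[simp] theorem adj_inl_inr_inr {a : Fin m} {j : Fin S} :
    (pendantPaths G w K S).Adj (.inl a) (.inr (.inr j)) ↔ a = w ∧ (j : ℕ) = 0 := by
  simp [pendantPaths]

@[simp] theorem adj_inr_inl_inl {a : Fin m} {i : Fin K} :
    (pendantPaths G w K S).Adj (.inr (.inl i)) (.inl a) ↔ a = w ∧ (i : ℕ) = 0 := by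
  rw [adj_comm, adj_inl_inr_inl]

@[simp] theorem adj_inr_inr_inl {a : Fin m} {j : Fin S} :
    (pendantPaths G w K S).Adj (.inr (.inr j)) (.inl a) ↔ a = w ∧ (j : ℕ) = 0 := by
  rw [adj_comm, adj_inl_inr_inr]

@[simp] theorem adj_inr_inl_inr_inl {i i' : Fin K} :
    (pendantPaths G w K S).Adj (.inr (.inl i)) (.inr (.inl i')) ↔
      (i' : ℕ) = i + 1 ∨ (i : ℕ) = i' + 1 := by
  simp only [pendantPaths, fromRel_adj, ne_eq, Sum.inr.injEq, Sum.inl.injEq,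
    and_iff_right_iff_imp]
  rintro h rfl
  omega

@[simp] theorem adj_inr_inr_inr_inr {j j' : Fin S} :
    (pendantPaths G w K S).Adj (.inr (.inr j)) (.inr (.inr j')) ↔
      (j' : ℕ) = j + 1 ∨ (j : ℕ) = j' + 1 := by
  simp only [pendantPaths, fromRel_adj, ne_eq, Sum.inr.injEq, and_iff_right_iff_imp]
  rintro h rfl
  omega

@[simp] theorem not_adj_inr_inl_inr_inr {i : Fin K} {j : Fin S} :
    ¬ (pendantPaths G w K S).Adj (.inr (.inl i)) (.inr (.inr j)) := by
  simp [pendantPaths]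

@[simp] theorem not_adj_inr_inr_inr_inl {i : Fin K} {j : Fin S} :
    ¬ (pendantPaths G w K S).Adj (.inr (.inr j)) (.inr (.inl i)) := by
  simp [pendantPaths]

noncomputable def leftArm (w : Fin m) (z : Fin m ⊕ (Fin K ⊕ Fin S) → ℝ) : ℕ → ℝ :=
  pathSeq (z (.inl w)) fun i => z (.inr (.inl i))

noncomputable def rightArm (w : Fin m) (z : Fin m ⊕ (Fin K ⊕ Fin S) → ℝ) : ℕ → ℝ :=
  pathSeq (z (.inl w)) fun j => z (.inr (.inr j))

theorem adjMatrix_mulVec_inl (z : Fin m ⊕ (Fin K ⊕ Fin S) → ℝ) (a : Fin m) :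
    ((pendantPaths G w K S).adjMatrix ℝ *ᵥ z) (.inl a) =
      (G.adjMatrix ℝ *ᵥ (z ∘ .inl)) a + if a = w then leftArm w z 1 + rightArm w z 1 else 0 := by
  simp [mulVec, dotProduct, Fintype.sum_sum_type, ite_and, leftArm, rightArm,
    ← sum_ite_val_eq_pathSeq (z (.inl w))]
  split_ifs <;> simp_all

theorem adjMatrix_mulVec_inr_inl (z : Fin m ⊕ (Fin K ⊕ Fin S) → ℝ) (i : Fin K) :
    ((pendantPaths G w K S).adjMatrix ℝ *ᵥ z) (.inr (.inl i)) =
      leftArm w z i + leftArm w z (i + 2) := by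
  unfold leftArm
  rw [← sum_ite_adj_eq_pathSeq]
  simp [mulVec, dotProduct, Fintype.sum_sum_type, ite_and]

theorem adjMatrix_mulVec_inr_inr (z : Fin m ⊕ (Fin K ⊕ Fin S) → ℝ) (j : Fin S) :
    ((pendantPaths G w K S).adjMatrix ℝ *ᵥ z) (.inr (.inr j)) =
      rightArm w z j + rightArm w z (j + 2) := by
  unfold rightArm
  rw [← sum_ite_adj_eq_pathSeq]
  simp [mulVec, dotProduct, Fintype.sum_sum_type, ite_and]

theorem deg_inl (hK : 0 < K) (hS : 0 < S) (a : Fin m) :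
    (deg (pendantPaths G w K S) (.inl a) : ℝ) = deg G a + if a = w then 2 else 0 := by
  rw [deg_eq_adjMatrix_mulVec_one, deg_eq_adjMatrix_mulVec_one, adjMatrix_mulVec_inl]
  simp [leftArm, rightArm, pathSeq, hK, hS, one_add_one_eq_two]

theorem deg_inr_inl (i : Fin K) :
    (deg (pendantPaths G w K S) (.inr (.inl i)) : ℝ) = if (i : ℕ) + 1 < K then 2 else 1 := by
  rw [deg_eq_adjMatrix_mulVec_one, adjMatrix_mulVec_inr_inl]
  obtain ⟨_ | i, hi⟩ := i <;> simp [leftArm, pathSeq] <;> split_ifs <;> first | omega | norm_num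

theorem deg_inr_inr (j : Fin S) :
    (deg (pendantPaths G w K S) (.inr (.inr j)) : ℝ) = if (j : ℕ) + 1 < S then 2 else 1 := by
  rw [deg_eq_adjMatrix_mulVec_one, adjMatrix_mulVec_inr_inr]
  obtain ⟨_ | j, hj⟩ := j <;> simp [rightArm, pathSeq] <;> split_ifs <;> first | omega | norm_num

variable {α ρ t c : ℝ}

@[simp] theorem leftArm_zero (z : Fin m ⊕ (Fin K ⊕ Fin S) → ℝ) : leftArm w z 0 = z (.inl w) := rfl
@[simp] theorem rightArm_zero (z : Fin m ⊕ (Fin K ⊕ Fin S) → ℝ) : rightArm w z 0 = z (.inl w) := rfl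

@[simp] theorem leftArm_val_succ (z : Fin m ⊕ (Fin K ⊕ Fin S) → ℝ) (i : Fin K) :
    leftArm w z (i + 1) = z (.inr (.inl i)) :=
  pathSeq_val_succ _ _ i

@[simp] theorem rightArm_val_succ (z : Fin m ⊕ (Fin K ⊕ Fin S) → ℝ) (j : Fin S) :
    rightArm w z (j + 1) = z (.inr (.inr j)) :=
  pathSeq_val_succ _ _ j

theorem Aalpha_mulVec_inl (hK : 0 < K) (hS : 0 < S) (z : Fin m ⊕ (Fin K ⊕ Fin S) → ℝ)
    (a : Fin m) :
    (Aalpha (pendantPaths G w K S) α *ᵥ z) (.inl a) = (Aalpha G α *ᵥ (z ∘ .inl)) a +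
      if a = w then 2 * α * z (.inl w) + (1 - α) * (leftArm w z 1 + rightArm w z 1) else 0 := by
  rw [Aalpha_mulVec_apply, Aalpha_mulVec_apply, deg_inl hK hS, adjMatrix_mulVec_inl]
  split_ifs with h
  · subst h
    simp only [Function.comp_apply]
    ring
  · simp

theorem pathRecurrence_leftArm_iff (hα : α < 1) (ht : ρ = 2 * α + (1 - α) * t)
    (hc : ρ = α + (1 - α) * c) (z : Fin m ⊕ (Fin K ⊕ Fin S) → ℝ) :
    PathRecurrence t c K (leftArm w z) ↔
      ∀ i : Fin K,
        (Aalpha (pendantPaths G w K S) α *ᵥ z) (.inr (.inl i)) = ρ * z (.inr (.inl i)) := by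
  refine PathRecurrence.iff_forall_fin.trans (forall_congr' fun i => ?_)
  rw [Aalpha_mulVec_apply, adjMatrix_mulVec_inr_inl, deg_inr_inl,
    ← leftArm_val_succ (w := w) z i, arm_eigen_eq_iff hα ht hc]

theorem pathRecurrence_rightArm_iff (hα : α < 1) (ht : ρ = 2 * α + (1 - α) * t)
    (hc : ρ = α + (1 - α) * c) (z : Fin m ⊕ (Fin K ⊕ Fin S) → ℝ) :
    PathRecurrence t c S (rightArm w z) ↔
      ∀ j : Fin S,
        (Aalpha (pendantPaths G w K S) α *ᵥ z) (.inr (.inr j)) = ρ * z (.inr (.inr j)) := by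
  refine PathRecurrence.iff_forall_fin.trans (forall_congr' fun j => ?_)
  rw [Aalpha_mulVec_apply, adjMatrix_mulVec_inr_inr, deg_inr_inr,
    ← rightArm_val_succ (w := w) z j, arm_eigen_eq_iff hα ht hc]

-- `g` on `G`, with the arms filled by the profiles that `eq_extend_of_mulVec_eq` forces on an
-- eigenvector.
noncomputable def extend (t c : ℝ) (w : Fin m) (g : Fin m → ℝ) (K S : ℕ) :
    Fin m ⊕ (Fin K ⊕ Fin S) → ℝ
  | .inl a => g a
  | .inr (.inl i) => g w / pathPoly t c K * pathPoly t c (K - (i + 1))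
  | .inr (.inr j) => g w / pathPoly t c S * pathPoly t c (S - (j + 1))

theorem leftArm_extend (hK : pathPoly t c K ≠ 0) (g : Fin m → ℝ) :
    leftArm w (extend t c w g K S) =
      fun n => if n ≤ K then g w / pathPoly t c K * pathPoly t c (K - n) else 0 := by
  funext n
  cases n with
  | zero => simp [extend, hK]
  | succ n => simp only [leftArm, pathSeq, extend]; split_ifs <;> first | rfl | omega

theorem rightArm_extend (hS : pathPoly t c S ≠ 0) (g : Fin m → ℝ) :
    rightArm w (extend t c w g K S) =
      fun n => if n ≤ S then g w / pathPoly t c S * pathPoly t c (S - n) else 0 := by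
  funext n
  cases n with
  | zero => simp [extend, hS]
  | succ n => simp only [rightArm, pathSeq, extend]; split_ifs <;> first | rfl | omega

@[simp] theorem extend_inl (g : Fin m → ℝ) (a : Fin m) : extend t c w g K S (.inl a) = g a := rfl

@[simp] theorem extend_comp_inl (g : Fin m → ℝ) : extend t c w g K S ∘ Sum.inl = g := rfl

theorem eq_extend_of_mulVec_eq (hα : α < 1) (ht : ρ = 2 * α + (1 - α) * t)
    (hc : ρ = α + (1 - α) * c) (hK : pathPoly t c K ≠ 0) (hS : pathPoly t c S ≠ 0)
    {x : Fin m ⊕ (Fin K ⊕ Fin S) → ℝ} (hx : Aalpha (pendantPaths G w K S) α *ᵥ x = ρ • x) :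
    x = extend t c w (x ∘ .inl) K S := by
  have heig : ∀ v, (Aalpha (pendantPaths G w K S) α *ᵥ x) v = ρ * x v := by simp [hx]
  have hL := (pathRecurrence_leftArm_iff hα ht hc x).mpr fun i => heig _
  have hR := (pathRecurrence_rightArm_iff hα ht hc x).mpr fun j => heig _
  funext v
  rcases v with a | i | j
  · rfl
  · simpa [extend] using hL.eq_div_mul (pathSeq_succ_self _ _) hK i.isLt
  · simpa [extend] using hR.eq_div_mul (pathSeq_succ_self _ _) hS j.isLt

theorem pos_apply_inl_of_mulVec_eq (hG : G.Connected) (hα : α < 1)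
    {x : Fin m ⊕ (Fin K ⊕ Fin S) → ℝ} (hx₀ : 0 ≤ x) (hx : x ≠ 0)
    (heig : Aalpha (pendantPaths G w K S) α *ᵥ x = ρ • x)
    (hext : x = extend t c w (x ∘ .inl) K S) : 0 < x (.inl w) := by
  refine (hx₀ _).lt_of_ne' fun hw => hx ?_
  let φ : G →g pendantPaths G w K S := ⟨Sum.inl, adj_inl_inl.mpr⟩
  funext v
  rcases v with a | i | j
  · exact eq_zero_of_reachable_of_Aalpha_mulVec_eq hα hx₀ heig hw ((hG.preconnected w a).map φ)
  · rw [hext]; simp [extend, hw]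
  · rw [hext]; simp [extend, hw]

theorem leftArm_extend_one (hK : 0 < K) (hPK : pathPoly t c K ≠ 0) (g : Fin m → ℝ) :
    leftArm w (extend t c w g K S) 1 = g w * armRatio t c K := by
  simp [leftArm_extend hPK, armRatio, Nat.one_le_iff_ne_zero.mpr hK.ne']
  ring

theorem rightArm_extend_one (hS : 0 < S) (hPS : pathPoly t c S ≠ 0) (g : Fin m → ℝ) :
    rightArm w (extend t c w g K S) 1 = g w * armRatio t c S := by
  simp [rightArm_extend hPS, armRatio, Nat.one_le_iff_ne_zero.mpr hS.ne']
  ring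

theorem Aalpha_mulVec_extend (hα : α < 1) (ht : ρ = 2 * α + (1 - α) * t)
    (hc : ρ = α + (1 - α) * c) (hP : ∀ n, pathPoly t c n ≠ 0) (hK : 0 < K) (hS : 0 < S)
    {x : Fin m ⊕ (Fin K ⊕ Fin S) → ℝ} (hx : Aalpha (pendantPaths G w K S) α *ᵥ x = ρ • x)
    {K' S' : ℕ} (hK' : 0 < K') (hS' : 0 < S') :
    Aalpha (pendantPaths G w K' S') α *ᵥ extend t c w (x ∘ .inl) K' S' =
      ρ • extend t c w (x ∘ .inl) K' S' +
        ((1 - α) * x (.inl w) * (armRatio t c K' + armRatio t c S' - armRatio t c K -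
          armRatio t c S)) • Pi.single (.inl w) 1 := by
  have hext := eq_extend_of_mulVec_eq hα ht hc (hP K) (hP S) hx
  have hxL := leftArm_extend_one (S := S) (w := w) hK (hP K) (x ∘ .inl)
  have hxR := rightArm_extend_one (K := K) (w := w) hS (hP S) (x ∘ .inl)
  rw [← hext] at hxL hxR
  have hyL := (pathRecurrence_leftArm_iff (G := G) hα ht hc (extend t c w (x ∘ .inl) K' S')).mp
    (by rw [leftArm_extend (hP K')]; exact PathRecurrence.of_pathPoly _)
  have hyR := (pathRecurrence_rightArm_iff (G := G) hα ht hc (extend t c w (x ∘ .inl) K' S')).mp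
    (by rw [rightArm_extend (hP S')]; exact PathRecurrence.of_pathPoly _)
  funext v
  rcases v with a | i | j
  · have hxa := congrFun hx (.inl a)
    rw [Aalpha_mulVec_inl hK hS, hxL, hxR] at hxa
    rw [Pi.add_apply, Aalpha_mulVec_inl hK' hS', leftArm_extend_one hK' (hP K'),
      rightArm_extend_one hS' (hP S')]
    simp only [extend_comp_inl, extend_inl, Function.comp_apply, Pi.smul_apply, smul_eq_mul,
      Pi.single_apply, Sum.inl.injEq] at hxa ⊢
    split_ifs at hxa ⊢ <;> linear_combination hxa
  · simp [hyL i]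
  · simp [hyR j]

end pendantPaths

theorem stmt_9 {m : ℕ} (G : SimpleGraph (Fin m)) (hG : G.Connected) (w : Fin m)
    (k s : ℕ) (hs : 1 ≤ s) (hk : s + 2 ≤ k)
    (α : ℝ) (hα0 : 0 ≤ α) (hα1 : α < 1)
    (hρ : 2 ≤ specRad (Aalpha (pendantPaths G w k s) α)) :
    specRad (Aalpha (pendantPaths G w k s) α) <
      specRad (Aalpha (pendantPaths G w (k - 1) (s + 1)) α) := by
  set ρ := specRad (Aalpha (pendantPaths G w k s) α)
  have h1α : 0 < 1 - α := by linarith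
  obtain ⟨t, ht⟩ : ∃ t, ρ = 2 * α + (1 - α) * t := ⟨(ρ - 2 * α) / (1 - α), by field_simp; ring⟩
  obtain ⟨c, hc⟩ : ∃ c, ρ = α + (1 - α) * c := ⟨(ρ - α) / (1 - α), by field_simp; ring⟩
  have ht2 : 2 ≤ t := by nlinarith
  have htc : t ≤ c := by nlinarith
  have hc1 : 1 < c := by linarith
  have hP n := (pathPoly.pos ht2 hc1 n).ne'
  have : Nonempty (Fin m ⊕ (Fin k ⊕ Fin s)) := ⟨.inl w⟩
  have : Nonempty (Fin m ⊕ (Fin (k - 1) ⊕ Fin (s + 1))) := ⟨.inl w⟩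
  obtain ⟨x, hx0, hxnn, hx⟩ := Matrix.exists_nonneg_mulVec_eq_specRad_smul
    (Aalpha_isSymm (pendantPaths G w k s) α) fun _ _ h => Aalpha_nonneg_of_ne hα1.le h
  have hxw := pendantPaths.pos_apply_inl_of_mulVec_eq hG hα1 hxnn hx0 hx
    (pendantPaths.eq_extend_of_mulVec_eq hα1 ht hc (hP k) (hP s) hx)
  refine Matrix.lt_specRad_of_mulVec_eq_add_smul_single (Aalpha_isSymm _ α) hxw ?_
    (pendantPaths.Aalpha_mulVec_extend hα1 ht hc hP (by omega) hs hx (by omega) (by omega))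
  have := armRatio_add_armRatio_lt ht2 hc1 htc hs hk
  exact mul_pos (mul_pos h1α hxw) (by linarith)
end

section
/- For a given nonincreasing degree sequence π of a tree, any two trees with degree sequence π that admit a BFS-ordering are isomorphic; consequently there is a unique (up to isomorphism) tree T*_π with degree sequence π having a BFS-ordering. -/
open Matrix Finset SimpleGraph
open scoped Classical

/-- `σ` enumerates the vertices of `G` as a BFS-ordering rooted at `σ 0`:
heights are nondecreasing, degrees are nonincreasing, and the crossing
condition (3) holds. -/
def BFSord {n : ℕ} (G : SimpleGraph (Fin n)) (hn : 0 < n) (σ : Fin n ≃ Fin n) : Prop :=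
  (∀ i j : Fin n, i ≤ j → G.dist (σ ⟨0, hn⟩) (σ i) ≤ G.dist (σ ⟨0, hn⟩) (σ j)) ∧
  (∀ i j : Fin n, i ≤ j → deg G (σ j) ≤ deg G (σ i)) ∧
  (∀ i j a b : Fin n, G.Adj (σ i) (σ a) → G.Adj (σ j) (σ b) →
    ¬ G.Adj (σ i) (σ b) → ¬ G.Adj (σ j) (σ a) →
    G.dist (σ ⟨0, hn⟩) (σ i) = G.dist (σ ⟨0, hn⟩) (σ j) →
    G.dist (σ ⟨0, hn⟩) (σ a) = G.dist (σ ⟨0, hn⟩) (σ i) + 1 →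
    G.dist (σ ⟨0, hn⟩) (σ b) = G.dist (σ ⟨0, hn⟩) (σ i) + 1 →
    i < j → a < b)

/-- `G` admits a BFS-ordering. -/
def hasBFSOrdering {n : ℕ} (G : SimpleGraph (Fin n)) : Prop :=
  ∃ (hn : 0 < n) (σ : Fin n ≃ Fin n), BFSord G hn σ

/-
Read the tree along a BFS-ordering: put the vertices in positions `0, …, n-1` and let `P k` be
the position of the parent of the vertex in position `k ≠ 0`. The tree is then the graph joining
each `k ≠ 0` to `P k`, with `P k < k`. The crossing condition of a BFS-ordering says precisely that
`P` is monotone, and the degree condition forces the vertex in position `k` to have degree `d k`,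
so `P` takes the value `0` exactly `d 0 + 1` times and any other `k` exactly `d k - 1` times.
A monotone map is determined by how often it takes each value, so `P`, and with it the tree, is
determined by `d`. Conversely, handing out the children to `0, 1, 2, …` in order gives a monotone
`P` with these multiplicities; it is a parent map because `d` is nonincreasing, and the identity
is a BFS-ordering of its tree.
-/

theorem Fin.eq_of_monotone_of_card_fiber_eq {α : Type*} [PartialOrder α] [DecidableEq α] {n : ℕ}
    {f g : Fin n → α} (hf : Monotone f) (hg : Monotone g)
    (h : ∀ a, #{i | f i = a} = #{i | g i = a}) : f = g := by
  refine List.ofFn_injective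
    (List.Perm.eq_of_pairwise' hf.sortedLE_ofFn.pairwise hg.sortedLE_ofFn.pairwise ?_)
  rw [← Multiset.coe_eq_coe, ← Fin.univ_val_map, ← Fin.univ_val_map]
  ext a
  simp only [Multiset.count_map, eq_comm (a := a)]
  exact h a

theorem Fin.eq_of_antitone_of_comp_perm {α : Type*} [PartialOrder α] {n : ℕ} {f g : Fin n → α}
    (hf : Antitone f) (hg : Antitone g) (τ : Equiv.Perm (Fin n)) (h : f ∘ τ = g) : f = g := by
  have := Tuple.unique_monotone (f := OrderDual.toDual ∘ f) (σ := 1) (τ := τ) hf.dual_right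
    (by rw [Function.comp_assoc, h]; exact hg.dual_right)
  exact h ▸ funext fun i => congrFun this i

namespace SimpleGraph

variable {V W : Type*} {G : SimpleGraph V} {G' : SimpleGraph W} {r u v : V}

theorem Iso.deg_map (φ : G ≃g G') (v : V) : deg G' (φ v) = deg G v := by
  rw [deg, deg, ← φ.toEmbedding.preimage_neighborSet v]
  exact (Set.ncard_preimage_of_injective_subset_range φ.injective (by simp)).symm

theorem Iso.dist_map (φ : G ≃g G') (u v : V) : G'.dist (φ u) (φ v) = G.dist u v := by
  by_cases h : G.Reachable u v
  · refine le_antisymm ?_ ?_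
    · obtain ⟨p, hp⟩ := h.exists_walk_length_eq_dist
      exact hp ▸ p.length_map φ.toHom ▸ dist_le _
    · obtain ⟨p, hp⟩ := ((Iso.reachable_iff (φ := φ)).2 h).exists_walk_length_eq_dist
      simpa [hp] using dist_le (p.map φ.symm.toHom)
  · rw [dist_eq_zero_of_not_reachable h,
      dist_eq_zero_of_not_reachable (mt (Iso.reachable_iff (φ := φ)).1 h)]

theorem Connected.exists_adj_dist_add_one_eq (hG : G.Connected) (hv : v ≠ r) :
    ∃ u, G.Adj v u ∧ G.dist r u + 1 = G.dist r v := by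
  obtain ⟨p, hp⟩ := hG.exists_walk_length_eq_dist v r
  cases p with
  | nil => exact absurd rfl hv
  | cons h q =>
    refine ⟨_, h, ?_⟩
    have hq : G.dist r _ ≤ q.length := dist_comm (G := G) ▸ dist_le q
    rw [Walk.length_cons, dist_comm] at hp
    rcases h.diff_dist_adj (u := r) with h' | h' | h' <;> omega

theorem IsTree.dist_eq_add_one_or_of_adj (hG : G.IsTree) (r : V) (h : G.Adj u v) :
    G.dist r v = G.dist r u + 1 ∨ G.dist r u = G.dist r v + 1 := by
  obtain ⟨p, hp, hpl⟩ := hG.connected.exists_path_of_dist r u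
  obtain ⟨q, hq, hql⟩ := hG.connected.exists_path_of_dist r v
  by_cases hu : u ∈ q.support
  · left
    rw [← hpl, ← hql, hG.isAcyclic.path_concat hp hq h hu, Walk.length_concat]
  · right
    have hv := hG.isAcyclic.mem_support_of_ne_mem_support_of_adj_of_isPath hp hq h hu
    rw [← hpl, ← hql, hG.isAcyclic.path_concat hq hp h.symm hv, Walk.length_concat]

theorem IsTree.eq_penultimate_of_adj (hG : G.IsTree) {q : G.Walk r v} (hq : q.IsPath)
    (h : G.Adj v u) (hd : G.dist r u + 1 = G.dist r v) : u = q.penultimate := by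
  refine hG.isAcyclic.eq_penultimate_of_adj_end hq h ?_
  by_contra hu
  obtain ⟨p, hp, hpl⟩ := hG.connected.exists_path_of_dist r u
  have hv := hG.isAcyclic.mem_support_of_ne_mem_support_of_adj_of_isPath hp hq h.symm hu
  have hpq := congrArg Walk.length (hG.isAcyclic.path_concat hq hp h hv)
  rw [Walk.length_concat, hpl] at hpq
  have := dist_le q
  omega

theorem IsTree.existsUnique_adj_dist_add_one_eq (hG : G.IsTree) (hv : v ≠ r) :
    ∃! u, G.Adj v u ∧ G.dist r u + 1 = G.dist r v := by
  obtain ⟨u, hu⟩ := hG.connected.exists_adj_dist_add_one_eq hv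
  obtain ⟨q, hq, -⟩ := hG.connected.exists_path_of_dist r v
  refine ⟨u, hu, fun w hw => ?_⟩
  rw [hG.eq_penultimate_of_adj hq hw.1 hw.2, hG.eq_penultimate_of_adj hq hu.1 hu.2]

/-- The largest vertex of a cycle would have two distinct smaller neighbours on it. -/
theorem isAcyclic_of_forall_adj_lt_eq [LinearOrder V]
    (h : ∀ v u w, G.Adj v u → G.Adj v w → u < v → w < v → u = w) : G.IsAcyclic := by
  intro v c hc
  obtain ⟨M, hMc, hMmax⟩ := c.support.toFinset.exists_max_image id ⟨v, by simp⟩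
  rw [List.mem_toFinset] at hMc
  set c' := c.rotate M hMc
  have hc' : c'.IsCycle := hc.rotate hMc
  have hlt : ∀ x ∈ c'.support, x ≠ M → x < M := fun x hx hxM =>
    lt_of_le_of_ne (hMmax x (by simpa using (c.mem_support_rotate_iff M hMc).1 hx)) hxM
  have hs := c'.adj_snd hc'.not_nil
  have hp := (c'.adj_penultimate hc'.not_nil).symm
  exact hc'.snd_ne_penultimate <| h M _ _ hs hp
    (hlt _ (c'.getVert_mem_support 1) hs.ne.symm) (hlt _ (c'.getVert_mem_support _) hp.ne.symm)

end SimpleGraph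

theorem BFSord.of_iso {n : ℕ} {G H : SimpleGraph (Fin n)} {hn : 0 < n} (φ : H ≃g G)
    (h : BFSord G hn φ.toEquiv) : BFSord H hn (Equiv.refl _) := by
  obtain ⟨h₁, h₂, h₃⟩ := h
  refine ⟨fun i j hij => ?_, fun i j hij => ?_, fun i j a b => ?_⟩
  · simpa only [RelIso.coe_fn_toEquiv, Equiv.refl_apply, φ.dist_map] using h₁ i j hij
  · simpa only [RelIso.coe_fn_toEquiv, Equiv.refl_apply, φ.deg_map] using h₂ i j hij
  · simpa only [RelIso.coe_fn_toEquiv, Equiv.refl_apply, φ.map_adj_iff, φ.dist_map] using h₃ i j a b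

section ParentGraph

variable {n : ℕ}

/-- `P k` is the parent of `k` in a tree on `Fin n` rooted at `0`. The value `P 0 = 0` is only a
normalisation: it does not affect `parentGraph P`. -/
structure IsParentFun [NeZero n] (P : Fin n → Fin n) : Prop where
  map_zero : P 0 = 0
  lt_self : ∀ k, k ≠ 0 → P k < k

def parentGraph (P : Fin n → Fin n) : SimpleGraph (Fin n) :=
  SimpleGraph.fromRel fun a b => b < a ∧ P a = b

def children (P : Fin n → Fin n) (i : Fin n) : Finset (Fin n) :=
  {k | i < k ∧ P k = i}

theorem parentGraph_adj {P : Fin n → Fin n} {a b : Fin n} :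
    (parentGraph P).Adj a b ↔ (b < a ∧ P a = b) ∨ (a < b ∧ P b = a) := by
  rw [parentGraph, fromRel_adj, and_iff_right_iff_imp]
  rintro (⟨h, -⟩ | ⟨h, -⟩)
  exacts [h.ne', h.ne]

namespace IsParentFun

variable [NeZero n] {P : Fin n → Fin n}

theorem adj_self (hP : IsParentFun P) {k : Fin n} (hk : k ≠ 0) : (parentGraph P).Adj k (P k) :=
  parentGraph_adj.2 (.inl ⟨hP.lt_self k hk, rfl⟩)

theorem connected (hP : IsParentFun P) : (parentGraph P).Connected := by
  have hreach : ∀ k, (parentGraph P).Reachable k 0 := fun k => by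
    induction k using WellFoundedLT.induction with
    | _ k ih =>
      by_cases hk : k = 0
      · rw [hk]
      · exact (hP.adj_self hk).reachable.trans (ih _ (hP.lt_self k hk))
  exact (connected_iff _).2 ⟨fun u v => (hreach u).trans (hreach v).symm, ⟨0⟩⟩

theorem isTree (hP : IsParentFun P) : (parentGraph P).IsTree := by
  refine ⟨hP.connected, isAcyclic_of_forall_adj_lt_eq fun v u w hu hw hlt hwlt => ?_⟩
  have hpar : ∀ x, (parentGraph P).Adj v x → x < v → P v = x := fun x hx hxv =>
    (parentGraph_adj.1 hx).elim And.right fun h => absurd h.1 hxv.not_gt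
  rw [← hpar u hu hlt, hpar w hw hwlt]

/-- By induction on the distance: if `k` is a counterexample, its neighbour closer to the root is
a child `u` of `k`, and `u` is a counterexample closer to the root. -/
theorem dist_parent_add_one (hP : IsParentFun P) {k : Fin n} (hk : k ≠ 0) :
    (parentGraph P).dist 0 (P k) + 1 = (parentGraph P).dist 0 k := by
  induction hd : (parentGraph P).dist 0 k using Nat.strong_induction_on generalizing k with
  | _ m ih =>
    obtain ⟨u, hku, hu⟩ := hP.connected.exists_adj_dist_add_one_eq hk
    rcases parentGraph_adj.1 hku with ⟨-, rfl⟩ | ⟨hku', rfl⟩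
    · omega
    · have := ih _ (hd ▸ hu ▸ Nat.lt_succ_self _) ((Fin.zero_le _).trans_lt hku').ne' rfl
      omega

theorem monotone_dist (hP : IsParentFun P) (hmono : Monotone P) :
    Monotone ((parentGraph P).dist 0) := by
  intro i j hij
  induction j using WellFoundedLT.induction generalizing i with
  | _ j ih =>
    by_cases hi : i = 0
    · simp [hi]
    have hj : j ≠ 0 := fun hj => hi (le_antisymm (hj ▸ hij) (Fin.zero_le i))
    rw [← hP.dist_parent_add_one hi, ← hP.dist_parent_add_one hj]
    exact Nat.add_le_add_right (ih _ (hP.lt_self j hj) (hmono hij)) 1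

theorem deg_parentGraph (hP : IsParentFun P) (i : Fin n) :
    deg (parentGraph P) i = #(children P i) + if i = 0 then 0 else 1 := by
  by_cases hi : i = 0
  · subst hi
    have : (parentGraph P).neighborSet 0 = children P 0 := by
      ext k
      simp [children, parentGraph_adj]
    rw [deg, this, Set.ncard_coe_finset, if_pos rfl, add_zero]
  · have : (parentGraph P).neighborSet i = insert (P i) (children P i) := by
      ext k
      simp only [mem_neighborSet, parentGraph_adj, coe_insert, Set.mem_insert_iff, children,
        coe_filter, mem_univ, true_and]
      constructor
      · rintro (⟨-, rfl⟩ | h)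
        exacts [.inl rfl, .inr h]
      · rintro (rfl | h)
        exacts [.inl ⟨hP.lt_self i hi, rfl⟩, .inr h]
    rw [deg, this, Set.ncard_coe_finset, if_neg hi, card_insert_of_notMem]
    simp [children, (hP.lt_self i hi).not_gt]

theorem card_fiber (hP : IsParentFun P) (i : Fin n) :
    #{k | P k = i} = #(children P i) + if i = 0 then 1 else 0 := by
  by_cases hi : i = 0
  · subst hi
    have : ({k | P k = 0} : Finset (Fin n)) = insert 0 (children P 0) := by
      ext k
      by_cases hk : k = 0
      · simp [hk, hP.map_zero]
      · simp [children, hk, Fin.pos_iff_ne_zero]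
    rw [this, card_insert_of_notMem (by simp [children]), if_pos rfl]
  · have : ({k | P k = i} : Finset (Fin n)) = children P i := by
      ext k
      simp only [children, mem_filter, mem_univ, true_and, iff_and_self]
      rintro rfl
      refine hP.lt_self k fun hk => hi ?_
      rw [hk, hP.map_zero]
    rw [this, if_neg hi, add_zero]

theorem eq_of_deg_parentGraph_eq {Q : Fin n → Fin n} (hP : IsParentFun P) (hQ : IsParentFun Q)
    (hPm : Monotone P) (hQm : Monotone Q) (h : ∀ i, deg (parentGraph P) i = deg (parentGraph Q) i) :
    P = Q :=
  Fin.eq_of_monotone_of_card_fiber_eq hPm hQm fun i => by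
    have := h i
    rw [hP.deg_parentGraph, hQ.deg_parentGraph] at this
    rw [hP.card_fiber, hQ.card_fiber]
    omega

theorem parent_eq_of_adj_of_dist (hP : IsParentFun P) {x y : Fin n} (h : (parentGraph P).Adj x y)
    (hd : (parentGraph P).dist 0 y = (parentGraph P).dist 0 x + 1) : P y = x := by
  rcases parentGraph_adj.1 h with ⟨hyx, rfl⟩ | ⟨-, hy⟩
  · have := hP.dist_parent_add_one ((Fin.zero_le _).trans_lt hyx).ne'
    omega
  · exact hy

theorem bfsOrd_refl (hP : IsParentFun P) (hmono : Monotone P)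
    (hdeg : Antitone (deg (parentGraph P))) (hn : 0 < n) :
    BFSord (parentGraph P) hn (Equiv.refl _) := by
  refine ⟨fun i j hij => hP.monotone_dist hmono hij, fun i j hij => hdeg hij, ?_⟩
  intro i j a b hia hjb _ _ hij hda hdb hlt
  by_contra! hba
  have ha : P a = i := hP.parent_eq_of_adj_of_dist hia hda
  have hb : P b = j := hP.parent_eq_of_adj_of_dist hjb (hdb.trans (congrArg (· + 1) hij))
  exact (ha ▸ hb ▸ hmono hba).not_gt hlt

/-- If `P b < P a` with `a ≤ b`, the edges `P a – a` and `P b – b` violate the crossing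
condition. -/
theorem monotone_of_bfsOrd (hP : IsParentFun P) {hn : 0 < n}
    (h : BFSord (parentGraph P) hn (Equiv.refl _)) : Monotone P := by
  obtain ⟨hheight, -, hcross⟩ := h
  simp only [Equiv.refl_apply, show (⟨0, hn⟩ : Fin n) = 0 from rfl] at hheight hcross
  intro a b hab
  by_contra! hlt
  have ha : a ≠ 0 := by rintro rfl; exact (Fin.zero_le (P b)).not_gt (hP.map_zero ▸ hlt)
  have hb : b ≠ 0 := fun hb => ha (le_antisymm (hb ▸ hab) (Fin.zero_le a))
  have hda := hP.dist_parent_add_one ha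
  have hdb := hP.dist_parent_add_one hb
  have h₁ : (parentGraph P).dist 0 a ≤ (parentGraph P).dist 0 b := hheight a b hab
  have h₂ : (parentGraph P).dist 0 (P b) ≤ (parentGraph P).dist 0 (P a) := hheight _ _ hlt.le
  have hnadj : ∀ x y, P y ≠ P x →
      (parentGraph P).dist 0 y = (parentGraph P).dist 0 (P x) + 1 →
      ¬ (parentGraph P).Adj (P x) y := fun x y hxy hd hadj =>
    hxy (hP.parent_eq_of_adj_of_dist hadj hd)
  refine (hcross (P b) (P a) b a (hP.adj_self hb).symm (hP.adj_self ha).symm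
    (hnadj b a hlt.ne' (by omega)) (hnadj a b hlt.ne (by omega)) (by omega) (by omega) (by omega)
    hlt).not_ge hab

end IsParentFun

end ParentGraph

theorem SimpleGraph.IsTree.exists_parentFun {n : ℕ} [NeZero n] {T : SimpleGraph (Fin n)}
    (hT : T.IsTree) {σ : Fin n ≃ Fin n} (hσ : Monotone fun k => T.dist (σ 0) (σ k)) :
    ∃ P, IsParentFun P ∧ ∀ a b, T.Adj (σ a) (σ b) ↔ (parentGraph P).Adj a b := by
  set h := fun k => T.dist (σ 0) (σ k) with hh
  have hpar : ∀ k, ∃ u, k ≠ 0 → T.Adj (σ k) (σ u) ∧ h u + 1 = h k := fun k => by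
    by_cases hk : k = 0
    · exact ⟨0, absurd hk⟩
    obtain ⟨u, hu⟩ := hT.connected.exists_adj_dist_add_one_eq (σ.injective.ne hk)
    exact ⟨σ.symm u, fun _ => by simpa [hh] using hu⟩
  choose Q hQ using hpar
  have hQ_unique : ∀ k, k ≠ 0 → ∀ u, T.Adj (σ k) (σ u) → h u + 1 = h k → Q k = u :=
    fun k hk u hu hd => σ.injective <|
      (hT.existsUnique_adj_dist_add_one_eq (σ.injective.ne hk)).unique (hQ k hk) ⟨hu, hd⟩
  have hQ_lt : ∀ k, k ≠ 0 → Q k < k := fun k hk =>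
    lt_of_not_ge fun hle => by have := hσ hle; have := (hQ k hk).2; omega
  set P := Function.update Q 0 0
  have hPQ : ∀ k, k ≠ 0 → P k = Q k := fun k hk => Function.update_of_ne hk _ _
  refine ⟨P, ⟨Function.update_self .., fun k hk => hPQ k hk ▸ hQ_lt k hk⟩, fun a b => ?_⟩
  rw [parentGraph_adj]
  constructor
  · intro hab
    rcases hT.dist_eq_add_one_or_of_adj (σ 0) hab with hd | hd
    · have hb : b ≠ 0 := by rintro rfl; simp at hd
      have := hPQ b hb ▸ hQ_unique b hb a hab.symm hd.symm
      exact .inr ⟨this ▸ hPQ b hb ▸ hQ_lt b hb, this⟩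
    · have ha : a ≠ 0 := by rintro rfl; simp at hd
      have := hPQ a ha ▸ hQ_unique a ha b hab hd.symm
      exact .inl ⟨this ▸ hPQ a ha ▸ hQ_lt a ha, this⟩
  · rintro (⟨hba, rfl⟩ | ⟨hab, rfl⟩)
    · have ha : a ≠ 0 := ((Fin.zero_le _).trans_lt hba).ne'
      exact hPQ a ha ▸ (hQ a ha).1
    · have hb : b ≠ 0 := ((Fin.zero_le _).trans_lt hab).ne'
      exact (hPQ b hb ▸ (hQ b hb).1).symm

theorem exists_parentFun_of_bfsOrd {n : ℕ} [NeZero n] {T : SimpleGraph (Fin n)} (hT : T.IsTree)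
    {hn : 0 < n} {σ : Fin n ≃ Fin n} (hσ : BFSord T hn σ) {d : Fin n → ℕ}
    (hmono : ∀ i j : Fin n, i ≤ j → d j ≤ d i) (hd : ∃ e : Fin n ≃ Fin n, ∀ i, deg T (e i) = d i) :
    ∃ P, IsParentFun P ∧ Monotone P ∧ (∀ i, deg (parentGraph P) i = d i) ∧
      Nonempty (parentGraph P ≃g T) := by
  obtain ⟨P, hP, hadj⟩ := hT.exists_parentFun (σ := σ) hσ.1
  let φ : parentGraph P ≃g T := ⟨σ, hadj _ _⟩
  have hbfs := BFSord.of_iso φ hσ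
  obtain ⟨e, he⟩ := hd
  have hdeg := Fin.eq_of_antitone_of_comp_perm hbfs.2.1 hmono (e.trans φ.symm.toEquiv)
    (funext fun i => by simp [← he i, ← φ.deg_map])
  exact ⟨P, hP, hP.monotone_of_bfsOrd hbfs, congrFun hdeg, ⟨φ⟩⟩

theorem Antitone.le_sum_range {c : ℕ → ℕ} (hc : Antitone c) {n : ℕ}
    (hsum : ∑ m ∈ range n, c m = n - 1) {i : ℕ} (hi : i < n) : i ≤ ∑ m ∈ range i, c m := by
  by_cases h : 1 ≤ c (i - 1)
  · calc i = ∑ _m ∈ range i, 1 := by simp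
      _ ≤ ∑ m ∈ range i, c m :=
        sum_le_sum fun m hm => h.trans (hc (Nat.le_sub_one_of_lt (mem_range.1 hm)))
  · have hzero : ∀ m ∈ Ico i n, c m = 0 := fun m hm =>
      Nat.eq_zero_of_le_zero (by have := hc (show i - 1 ≤ m by simp at hm; omega); omega)
    rw [← sum_range_add_sum_Ico c hi.le, sum_eq_zero hzero] at hsum
    omega

/-- Handing out `c 0` children to vertex `0`, then `c 1` to vertex `1`, and so on, the children
of `i` are the vertices `firstChild c i, …, firstChild c (i + 1) - 1`. -/
def firstChild (c : ℕ → ℕ) (i : ℕ) : ℕ := 1 + ∑ m ∈ range i, c m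

def greedyParent (n : ℕ) (c : ℕ → ℕ) (k : ℕ) : ℕ :=
  Nat.findGreatest (fun i => firstChild c i ≤ k) (n - 1)

section greedyParent

variable {n : ℕ} {c : ℕ → ℕ}

theorem monotone_firstChild : Monotone (firstChild c) := fun _ _ hab =>
  Nat.add_le_add_left (sum_le_sum_of_subset (range_subset_range.2 hab)) 1

theorem firstChild_self [NeZero n] (hsum : ∑ m ∈ range n, c m = n - 1) : firstChild c n = n := by
  have := NeZero.ne n
  simp only [firstChild, hsum]
  omega

theorem greedyParent_lt [NeZero n] (k : ℕ) : greedyParent n c k < n :=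
  (Nat.findGreatest_le _).trans_lt (Nat.sub_one_lt (NeZero.ne n))

theorem greedyParent_lt_self [NeZero n] (hfeas : ∀ i < n, i ≤ ∑ m ∈ range i, c m) {k : ℕ}
    (hk : k ≠ 0) : greedyParent n c k < k := by
  by_cases h : greedyParent n c k = 0
  · omega
  · have := hfeas _ (greedyParent_lt (c := c) k)
    have : firstChild c (greedyParent n c k) ≤ k :=
      Nat.findGreatest_of_ne_zero (P := fun i => firstChild c i ≤ k) rfl h
    simp only [firstChild] at this
    omega

theorem lt_and_greedyParent_eq_iff [NeZero n] (hsum : ∑ m ∈ range n, c m = n - 1)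
    (hfeas : ∀ i < n, i ≤ ∑ m ∈ range i, c m) {i k : ℕ} (hi : i < n) (hk : k < n) :
    i < k ∧ greedyParent n c k = i ↔ firstChild c i ≤ k ∧ k < firstChild c (i + 1) := by
  have hi' : i + 1 ≤ firstChild c i := by have := hfeas i hi; simp only [firstChild]; omega
  have hn := firstChild_self hsum
  rw [greedyParent, Nat.findGreatest_eq_iff]
  constructor
  · rintro ⟨hik, -, h₁, h₂⟩
    refine ⟨?_, lt_of_not_ge fun h => ?_⟩
    · by_cases hi0 : i = 0
      · simp only [hi0, firstChild, range_zero, sum_empty]; omega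
      · exact h₁ hi0
    · by_cases hin : i + 1 ≤ n - 1
      · exact h₂ (by omega) hin h
      · rw [show i + 1 = n by omega, hn] at h; omega
  · rintro ⟨h₁, h₂⟩
    refine ⟨by omega, by omega, fun _ => h₁, fun m hm _ hmk => ?_⟩
    have := monotone_firstChild (c := c) (show i + 1 ≤ m by omega)
    omega

end greedyParent

theorem exists_parentFun_card_children {n : ℕ} [NeZero n] {c : ℕ → ℕ}
    (hsum : ∑ m ∈ range n, c m = n - 1) (hfeas : ∀ i < n, i ≤ ∑ m ∈ range i, c m) :
    ∃ P : Fin n → Fin n, IsParentFun P ∧ Monotone P ∧ ∀ i, #(children P i) = c i := by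
  set P : Fin n → Fin n := fun k => ⟨greedyParent n c k, greedyParent_lt k⟩
  refine ⟨P, ⟨Fin.ext ?_, fun k hk => greedyParent_lt_self hfeas (Fin.val_ne_of_ne hk)⟩,
    fun a b hab => Nat.findGreatest_mono (fun i h => h.trans hab) le_rfl, fun i => ?_⟩
  · refine Nat.findGreatest_eq_zero_iff.2 fun m _ _ h => ?_
    simp [firstChild] at h
  · have hi : firstChild c (i + 1) ≤ n :=
      (firstChild_self hsum).le.trans' (monotone_firstChild (show (i : ℕ) + 1 ≤ n from i.isLt))
    have : children P i = (Ico (firstChild c i) (firstChild c (i + 1))).attachFin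
        fun m hm => by simp at hm; omega := by
      ext k
      simp only [children, mem_filter, mem_univ, true_and, Fin.lt_def, Fin.ext_iff, mem_attachFin,
        mem_Ico]
      exact lt_and_greedyParent_eq_iff hsum hfeas i.isLt k.isLt
    rw [this, card_attachFin, Nat.card_Ico]
    simp only [firstChild, sum_range_succ]
    omega

/-- The number of children of vertex `m` in a tree rooted at `0` with degree sequence `d`. -/
def childQuota {n : ℕ} (d : Fin n → ℕ) (m : ℕ) : ℕ :=
  if h : m < n then d ⟨m, h⟩ - if m = 0 then 0 else 1 else 0

section childQuota

variable {n : ℕ} {d : Fin n → ℕ}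

theorem childQuota_antitone (hmono : ∀ i j : Fin n, i ≤ j → d j ≤ d i) :
    Antitone (childQuota d) := by
  intro a b hab
  by_cases hb : b < n
  · have ha : a < n := by omega
    have := hmono ⟨a, ha⟩ ⟨b, hb⟩ hab
    simp only [childQuota, ha, hb, dif_pos]
    split_ifs <;> omega
  · simp [childQuota, hb]

theorem childQuota_add [NeZero n] (hpos : ∀ i, 1 ≤ d i) (i : Fin n) :
    childQuota d i + (if i = 0 then 0 else 1) = d i := by
  have := hpos i
  simp only [childQuota, i.isLt, dif_pos, Fin.eta, Fin.val_eq_zero_iff]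
  split_ifs <;> omega

theorem sum_childQuota [NeZero n] (hpos : ∀ i, 1 ≤ d i) (hsum : ∑ i, d i = 2 * (n - 1)) :
    ∑ m ∈ range n, childQuota d m = n - 1 := by
  have hone : ∑ m ∈ range n, (if m = 0 then 0 else 1) = n - 1 := by
    obtain ⟨k, hk⟩ := Nat.exists_eq_add_one_of_ne_zero (NeZero.ne n)
    simp [hk, sum_range_succ']
  rw [← Fin.sum_univ_eq_sum_range] at hone ⊢
  simp only [Fin.val_eq_zero_iff] at hone
  simp only [← childQuota_add hpos, sum_add_distrib, hone] at hsum
  omega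

end childQuota

theorem stmt_12 {n : ℕ} (hn : 1 ≤ n) (d : Fin n → ℕ)
    (hpos : ∀ i, 1 ≤ d i) (hmono : ∀ i j : Fin n, i ≤ j → d j ≤ d i)
    (hsum : ∑ i, d i = 2 * (n - 1)) :
    (∃ T : SimpleGraph (Fin n), T.IsTree ∧
      (∃ e : Fin n ≃ Fin n, ∀ i, deg T (e i) = d i) ∧ hasBFSOrdering T) ∧
    (∀ T₁ T₂ : SimpleGraph (Fin n), T₁.IsTree → T₂.IsTree →
      (∃ e : Fin n ≃ Fin n, ∀ i, deg T₁ (e i) = d i) →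
      (∃ e : Fin n ≃ Fin n, ∀ i, deg T₂ (e i) = d i) →
      hasBFSOrdering T₁ → hasBFSOrdering T₂ →
      Nonempty (T₁ ≃g T₂)) := by
  have : NeZero n := ⟨by omega⟩
  constructor
  · have hquota := sum_childQuota hpos hsum
    obtain ⟨P, hP, hPm, hcard⟩ := exists_parentFun_card_children hquota
      fun i hi => (childQuota_antitone hmono).le_sum_range hquota hi
    have hdeg : ∀ i, deg (parentGraph P) i = d i := fun i => by
      rw [hP.deg_parentGraph, hcard, childQuota_add hpos]
    refine ⟨parentGraph P, hP.isTree, ⟨Equiv.refl _, hdeg⟩, hn, Equiv.refl _,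
      hP.bfsOrd_refl hPm (fun i j hij => ?_) hn⟩
    rw [hdeg, hdeg]
    exact hmono i j hij
  · rintro T₁ T₂ hT₁ hT₂ hd₁ hd₂ ⟨_, σ₁, hσ₁⟩ ⟨_, σ₂, hσ₂⟩
    obtain ⟨P₁, hP₁, hm₁, hdeg₁, ⟨φ₁⟩⟩ := exists_parentFun_of_bfsOrd hT₁ hσ₁ hmono hd₁
    obtain ⟨P₂, hP₂, hm₂, hdeg₂, ⟨φ₂⟩⟩ := exists_parentFun_of_bfsOrd hT₂ hσ₂ hmono hd₂
    obtain rfl : P₁ = P₂ :=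
      hP₁.eq_of_deg_parentGraph_eq hP₂ hm₁ hm₂ fun i => (hdeg₁ i).trans (hdeg₂ i).symm
    exact ⟨φ₁.symm.trans φ₂⟩
end

section
/- Let G be a connected graph with a cycle C, rooted at a vertex v₀, where h(v) denotes distance to v₀. If G is unicyclic (exactly one cycle), then the vertex of C of minimal height is unique: there do not exist two distinct vertices of C at the same minimal height. -/
open Matrix Finset SimpleGraph
open scoped Classical

/-!
Choose for every vertex `v ≠ v₀` a neighbour `parent v` one step closer to `v₀`. The edges
`s(v, parent v)` are `n - 1` distinct edges of `G`, so only one edge of `G` lies outside them.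
A tree edge `s(v, parent v)` on the cycle `C` has both ends on `C` and `h v = h (parent v) + 1`,
so `v` is a vertex of `C` strictly above `min h`. If two vertices of `C` attain `min h`, at most
`|C| - 2` edges of `C` are tree edges and at most one is not, although `C` has `|C|` edges.
-/

namespace SimpleGraph

variable {V : Type*} {G : SimpleGraph V}

lemma Connected.exists_adj_dist_add_one (hG : G.Connected) {v₀ v : V} (hv : v ≠ v₀) :
    ∃ p, G.Adj p v ∧ G.dist v₀ p + 1 = G.dist v₀ v := by
  obtain ⟨q, hq⟩ := hG.exists_walk_length_eq_dist v v₀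
  cases q with
  | nil => exact absurd rfl hv
  | @cons _ p _ hadj q =>
    have hp : G.dist v₀ p ≤ q.length := dist_comm ▸ dist_le q
    have htri : G.dist v₀ v ≤ G.dist v₀ p + 1 :=
      dist_eq_one_iff_adj.mpr hadj.symm ▸ hG.dist_triangle
    rw [dist_comm, ← hq, Walk.length_cons] at htri ⊢
    exact ⟨p, hadj.symm, by omega⟩

/-- A neighbour of `v` one step closer to `v₀`; junk value `v` when there is none. -/
noncomputable def bfsParent (G : SimpleGraph V) (v₀ v : V) : V :=
  if h : ∃ p, G.Adj p v ∧ G.dist v₀ p + 1 = G.dist v₀ v then h.choose else v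

lemma Connected.bfsParent_spec (hG : G.Connected) {v₀ v : V} (hv : v ≠ v₀) :
    G.Adj (G.bfsParent v₀ v) v ∧ G.dist v₀ (G.bfsParent v₀ v) + 1 = G.dist v₀ v := by
  have h := hG.exists_adj_dist_add_one hv
  rw [bfsParent, dif_pos h]
  exact h.choose_spec

section Finite

variable [Fintype V] [DecidableEq V]

noncomputable def bfsTreeEdges (G : SimpleGraph V) (v₀ : V) : Finset (Sym2 V) :=
  (univ.erase v₀).image fun v => s(v, G.bfsParent v₀ v)

lemma Connected.bfsTreeEdges_subset_edgeFinset [Fintype G.edgeSet] (hG : G.Connected) (v₀ : V) :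
    G.bfsTreeEdges v₀ ⊆ G.edgeFinset := by
  simp only [subset_iff, bfsTreeEdges, mem_image, mem_erase]
  rintro _ ⟨v, ⟨hv, -⟩, rfl⟩
  exact mem_edgeFinset.mpr (hG.bfsParent_spec hv).1.symm

lemma Connected.card_bfsTreeEdges (hG : G.Connected) (v₀ : V) :
    #(G.bfsTreeEdges v₀) = Fintype.card V - 1 := by
  rw [bfsTreeEdges, card_image_of_injOn, card_erase_of_mem (mem_univ _), card_univ]
  intro x hx y hy hxy
  have hx := (hG.bfsParent_spec (mem_erase.mp hx).1).2
  have hy := (hG.bfsParent_spec (mem_erase.mp hy).1).2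
  rcases Sym2.eq_iff.mp hxy with ⟨h, -⟩ | ⟨hxy, hyx⟩
  · exact h
  · rw [hyx] at hx
    rw [← hxy] at hy
    omega

lemma Connected.card_edges_sdiff_bfsTreeEdges_le [Fintype G.edgeSet] (hG : G.Connected) (v₀ : V)
    {a b : V} (c : G.Walk a b) :
    #(c.edges.toFinset \ G.bfsTreeEdges v₀) ≤ #G.edgeFinset - (Fintype.card V - 1) := by
  rw [← hG.card_bfsTreeEdges v₀, ← card_sdiff_of_subset (hG.bfsTreeEdges_subset_edgeFinset v₀)]
  refine card_le_card (sdiff_subset_sdiff (fun e he => ?_) le_rfl)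
  exact mem_edgeFinset.mpr (c.edges_subset_edgeSet (List.mem_toFinset.mp he))

lemma Connected.card_edges_inter_bfsTreeEdges_le (hG : G.Connected) {v₀ a b : V}
    (c : G.Walk a b) {d : ℕ} (hd : ∀ z ∈ c.support, d ≤ G.dist v₀ z) :
    #(c.edges.toFinset ∩ G.bfsTreeEdges v₀) ≤ #{z ∈ c.support.toFinset | d < G.dist v₀ z} := by
  refine (card_le_card ?_).trans (card_image_le (f := fun v => s(v, G.bfsParent v₀ v)))
  simp only [subset_iff, mem_inter, List.mem_toFinset, bfsTreeEdges, mem_image, mem_erase]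
  rintro _ ⟨he, v, ⟨hv, -⟩, rfl⟩
  have hlow := hd _ (c.snd_mem_support_of_mem_edges he)
  have hstep := (hG.bfsParent_spec hv).2
  exact ⟨v, mem_filter.mpr ⟨List.mem_toFinset.mpr (c.fst_mem_support_of_mem_edges he),
    by omega⟩, rfl⟩

end Finite

lemma Walk.IsTrail.card_edges_toFinset [DecidableEq V] {a b : V} {c : G.Walk a b}
    (hc : c.IsTrail) : #c.edges.toFinset = c.length := by
  rw [List.toFinset_card_of_nodup hc.edges_nodup, Walk.length_edges]

lemma Walk.IsCycle.card_support_toFinset [DecidableEq V] {a : V} {c : G.Walk a a}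
    (hc : c.IsCycle) : #c.support.toFinset = c.length := by
  have htail : c.support.toFinset = c.support.tail.toFinset := by
    rw [← c.cons_tail_support, List.toFinset_cons, c.cons_tail_support,
      insert_eq_self.mpr (List.mem_toFinset.mpr (c.end_mem_tail_support hc.not_nil))]
  rw [htail, List.toFinset_card_of_nodup hc.support_nodup, List.length_tail, Walk.length_support]
  rfl

end SimpleGraph

theorem stmt_17 {n : ℕ} (G : SimpleGraph (Fin n)) (hG : G.Connected)
    (hedge : G.edgeSet.ncard = n)
    (a : Fin n) (c : G.Walk a a) (hc : c.IsCycle)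
    (v₀ u w : Fin n)
    (hu : u ∈ c.support) (hw : w ∈ c.support)
    (hmu : ∀ z ∈ c.support, G.dist v₀ u ≤ G.dist v₀ z)
    (hmw : ∀ z ∈ c.support, G.dist v₀ w ≤ G.dist v₀ z) :
    u = w := by
  by_contra hne
  have hdw : G.dist v₀ w = G.dist v₀ u := le_antisymm (hmw u hu) (hmu w hw)
  set E := c.edges.toFinset
  set T := G.bfsTreeEdges v₀
  have hcard : #G.edgeFinset = n := by
    rw [← Set.ncard_coe_finset, coe_edgeFinset, hedge]
  have hoff : #(E \ T) ≤ 1 :=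
    (hG.card_edges_sdiff_bfsTreeEdges_le v₀ c).trans (by rw [hcard, Fintype.card_fin]; omega)
  have hon : #(E ∩ T) ≤ c.length - 2 := calc
    #(E ∩ T) ≤ #{z ∈ c.support.toFinset | G.dist v₀ u < G.dist v₀ z} :=
      hG.card_edges_inter_bfsTreeEdges_le c hmu
    _ ≤ #(c.support.toFinset \ {u, w}) := by
      refine card_le_card fun z hz => ?_
      simp only [mem_filter, mem_sdiff, mem_insert, mem_singleton] at hz ⊢
      refine ⟨hz.1, ?_⟩
      rintro (rfl | rfl) <;> omega
    _ = c.length - 2 := by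
      rw [card_sdiff_of_subset (by simp [insert_subset_iff, hu, hw]),
        card_pair hne, hc.card_support_toFinset]
  have hsplit := card_sdiff_add_card_inter E T
  rw [hc.isTrail.card_edges_toFinset] at hsplit
  have := hc.three_le_length
  omega
end
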